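/- arXiv:1403.0166 — 8 statements merged into one kernel-verified Lean document; each statement's English description precedes it below -/
import Mathlib

section
/- Let J satisfy (J), let a : ℝ → ℝ be bounded and continuous with a_− := inf a, a_+ := sup a, let λ > a_+, and let φ > 0 be continuous on ℝ and satisfy (J*φ)(x) = (1 + λ − a(x))φ(x) for all x ≥ b. Then with C := C_J (1 + λ − a_−), where C_J := ‖J′‖_∞ / inf_{x∈[−δ,δ]}(J*J)(x), one has |(J*φ)′(x)| ≤ C (J*φ)(x) for every x ≥ b + δ; consequently (J*φ)(y) ≤ e^{C|x−y|} (J*φ)(x) for all x, y ∈ [b+δ, ∞). -/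
/-!
Differentiating under the integral, `(J*φ)′ = J′*φ`. Pointwise `|J′| ≤ C_J (J*J)`: on `[-δ, δ]`
because `J*J ≥ inf_{[-δ,δ]} J*J > 0` there (monotonicity and evenness make `J > 0` on
`(-δ, δ)`), and outside because `J′` vanishes. Hence, for `φ > 0`,
`|(J*φ)′| ≤ C_J (J*J)*φ = C_J J*(J*φ)`. For `x ≥ b + δ` the inner convolution only sees points
`≥ b`, where `J*φ = (1 + λ - a)φ ≤ (1 + λ - a_−)φ`, so `J*(J*φ)(x) ≤ (1 + λ - a_−)(J*φ)(x)`.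
The Harnack bound follows by integrating the resulting bound on the logarithmic derivative.
-/

open MeasureTheory Filter Real Set

/-- Convolution `(J*φ)(x) = ∫ J(y) φ(x−y) dy`. -/
noncomputable def convol (J φ : ℝ → ℝ) : ℝ → ℝ := fun x => ∫ y, J y * φ (x - y)

/-- `C_J = ‖J′‖_∞ / inf_{x∈[−δ,δ]} (J*J)(x)`. -/
noncomputable def CJconst (J : ℝ → ℝ) (δ : ℝ) : ℝ :=
  (⨆ y : ℝ, |deriv J y|) / sInf (convol J J '' Set.Icc (-δ) δ)

lemma integrable_mul_comp_sub {g h : ℝ → ℝ} (hgc : HasCompactSupport g) (hg : Continuous g)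
    (hh : Continuous h) (x : ℝ) : Integrable (fun t => g t * h (x - t)) :=
  hgc.convolutionExists_left_of_continuous_right (ContinuousLinearMap.mul ℝ ℝ)
    hg.locallyIntegrable hh x

lemma convol_nonneg {g h : ℝ → ℝ} (hg : ∀ x, 0 ≤ g x) (hh : ∀ x, 0 ≤ h x) (x : ℝ) :
    0 ≤ convol g h x :=
  integral_nonneg fun t => mul_nonneg (hg t) (hh _)

lemma convol_const_mul (g h : ℝ → ℝ) (c x : ℝ) :
    convol g (fun y => c * h y) x = c * convol g h x := by
  simp only [convol, mul_left_comm _ c, integral_const_mul]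

lemma convol_le_convol_of_le_on_tsupport {g h k : ℝ → ℝ} (hgc : HasCompactSupport g)
    (hg : Continuous g) (hg0 : ∀ x, 0 ≤ g x) (hh : Continuous h) (hk : Continuous k) (x : ℝ)
    (hle : ∀ z ∈ tsupport g, h (x - z) ≤ k (x - z)) :
    convol g h x ≤ convol g k x := by
  refine integral_mono (integrable_mul_comp_sub hgc hg hh x)
    (integrable_mul_comp_sub hgc hg hk x) fun z => ?_
  by_cases hz : z ∈ tsupport g
  · exact mul_le_mul_of_nonneg_left (hle z hz) (hg0 z)
  · simp [image_eq_zero_of_notMem_tsupport hz]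

lemma continuous_convol {g h : ℝ → ℝ} (hgc : HasCompactSupport g) (hg : Continuous g)
    (hh : Continuous h) : Continuous (convol g h) :=
  hgc.continuous_convolution_left (ContinuousLinearMap.mul ℝ ℝ) hg hh.locallyIntegrable

lemma convol_convol_assoc {g k φ : ℝ → ℝ} (hgc : HasCompactSupport g) (hg : Continuous g)
    (hkc : HasCompactSupport k) (hk : Continuous k) (hφ : Continuous φ) (x : ℝ) :
    convol (convol g k) φ x = convol g (convol k φ) x :=
  convolution_assoc (ContinuousLinearMap.mul ℝ ℝ) (ContinuousLinearMap.mul ℝ ℝ)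
    (ContinuousLinearMap.mul ℝ ℝ) (ContinuousLinearMap.mul ℝ ℝ) (fun a b c => mul_assoc a b c)
    hg.aestronglyMeasurable hk.aestronglyMeasurable hφ.aestronglyMeasurable
    (ae_of_all _ (integrable_mul_comp_sub hgc hg hk))
    (ae_of_all _ (integrable_mul_comp_sub hkc.norm hk.norm hφ.norm))
    (integrable_mul_comp_sub hgc.norm hg.norm
      (hkc.norm.continuous_convolution_left _ hk.norm hφ.norm.locallyIntegrable) x)

lemma hasDerivAt_convol {g φ : ℝ → ℝ} (hgc : HasCompactSupport g) (hg : ContDiff ℝ 1 g)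
    (hφ : Continuous φ) (x : ℝ) : HasDerivAt (convol g φ) (convol (deriv g) φ x) x :=
  hgc.hasDerivAt_convolution_left (ContinuousLinearMap.mul ℝ ℝ) hg hφ.locallyIntegrable x

lemma convol_self_pos {g : ℝ → ℝ} (hgc : HasCompactSupport g) (hg : Continuous g)
    (hg0 : ∀ x, 0 ≤ g x) {y : ℝ} (hy : 0 < g (y / 2)) : 0 < convol g g y := by
  have hcont : Continuous fun t => g t * g (y - t) := hg.mul (hg.comp (continuous_sub_left y))
  refine (integral_pos_iff_support_of_nonneg (fun t => mul_nonneg (hg0 t) (hg0 _))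
    (integrable_mul_comp_sub hgc hg hg y)).2 ?_
  refine (isOpen_compl_singleton.preimage hcont).measure_pos volume ⟨y / 2, ?_⟩
  have : y - y / 2 = y / 2 := by ring
  exact (mul_pos hy (by rwa [this])).ne'

lemma CJconst_nonneg {J : ℝ → ℝ} (hJ0 : ∀ x, 0 ≤ J x) (δ : ℝ) : 0 ≤ CJconst J δ := by
  refine div_nonneg (Real.iSup_nonneg fun _ => abs_nonneg _) (Real.sInf_nonneg ?_)
  rintro _ ⟨y, -, rfl⟩
  exact convol_nonneg hJ0 hJ0 y

section Kernel

variable {J : ℝ → ℝ} {δ : ℝ}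

lemma hasCompactSupport_of_tsupport_eq_Icc (hJsupp : tsupport J = Icc (-δ) δ) :
    HasCompactSupport J := by
  rw [HasCompactSupport, hJsupp]
  exact isCompact_Icc

lemma pos_of_abs_lt_of_tsupport_eq_Icc (hJ0 : ∀ x, 0 ≤ J x) (hJeven : ∀ x, J (-x) = J x)
    (hJanti : AntitoneOn J (Ici 0)) (hJsupp : tsupport J = Icc (-δ) δ) {x : ℝ} (hx : |x| < δ) :
    0 < J x := by
  refine (hJ0 x).lt_of_ne fun hx0 => ?_
  have hJabs : ∀ s, J |s| = J s := fun s => by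
    rcases abs_choice s with h | h <;> rw [h]
    exact hJeven s
  have hvanish : ∀ s, |x| ≤ |s| → J s = 0 := fun s hs => by
    rw [← hJabs]
    refine le_antisymm ?_ (hJ0 _)
    calc J |s| ≤ J |x| := hJanti (abs_nonneg x) (abs_nonneg s) hs
      _ = 0 := by rw [hJabs, hx0]
  have hsub : tsupport J ⊆ Icc (-|x|) |x| := by
    refine closure_minimal (fun s hs => ?_) isClosed_Icc
    by_contra hs'
    exact hs (hvanish s (not_lt.1 fun h => hs' (abs_le.1 h.le)))
  have hδ : δ ∈ tsupport J := by
    rw [hJsupp]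
    exact ⟨by linarith [abs_nonneg x], le_rfl⟩
  linarith [(hsub hδ).2]

lemma sInf_convol_self_image_pos (hδ : 0 < δ) (hJ : Continuous J) (hJ0 : ∀ x, 0 ≤ J x)
    (hJeven : ∀ x, J (-x) = J x) (hJanti : AntitoneOn J (Ici 0))
    (hJsupp : tsupport J = Icc (-δ) δ) :
    0 < sInf (convol J J '' Icc (-δ) δ) := by
  have hJc := hasCompactSupport_of_tsupport_eq_Icc hJsupp
  have hcont : Continuous (convol J J) := continuous_convol hJc hJ hJ
  obtain ⟨y, hy, hmin⟩ := (isCompact_Icc.image hcont).sInf_mem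
    ((nonempty_Icc.2 (by linarith : -δ ≤ δ)).image _)
  rw [← hmin]
  refine convol_self_pos hJc hJ hJ0 (pos_of_abs_lt_of_tsupport_eq_Icc hJ0 hJeven hJanti hJsupp ?_)
  rw [abs_div, abs_two]
  linarith [abs_le.2 ⟨hy.1, hy.2⟩]

lemma abs_deriv_le_CJconst_mul_convol_self (hJ : ContDiff ℝ 1 J) (hJ0 : ∀ x, 0 ≤ J x)
    (hJsupp : tsupport J = Icc (-δ) δ) (hm : 0 < sInf (convol J J '' Icc (-δ) δ)) (y : ℝ) :
    |deriv J y| ≤ CJconst J δ * convol J J y := by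
  have hJc := hasCompactSupport_of_tsupport_eq_Icc hJsupp
  by_cases hy : y ∈ Icc (-δ) δ
  · have hbdd : BddAbove (range fun y => |deriv J y|) := by
      simpa [Real.norm_eq_abs] using
        (hJ.continuous_deriv le_rfl).norm.bddAbove_range_of_hasCompactSupport hJc.deriv.norm
    have hcont : Continuous (convol J J) := continuous_convol hJc hJ.continuous hJ.continuous
    have hmy : sInf (convol J J '' Icc (-δ) δ) ≤ convol J J y :=
      csInf_le (isCompact_Icc.image hcont).bddBelow (mem_image_of_mem _ hy)
    calc |deriv J y| ≤ ⨆ y, |deriv J y| := le_ciSup hbdd y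
      _ = CJconst J δ * sInf (convol J J '' Icc (-δ) δ) := by
        rw [CJconst, div_mul_cancel₀ _ hm.ne']
      _ ≤ CJconst J δ * convol J J y := mul_le_mul_of_nonneg_left hmy (CJconst_nonneg hJ0 δ)
  · have hJ' : deriv J y = 0 := by
      refine image_eq_zero_of_notMem_tsupport fun hmem => hy ?_
      rw [← hJsupp]
      exact closure_minimal support_deriv_subset (isClosed_tsupport J) hmem
    rw [hJ', abs_zero]
    exact mul_nonneg (CJconst_nonneg hJ0 δ) (convol_nonneg hJ0 hJ0 y)

lemma abs_convol_deriv_le {φ : ℝ → ℝ} (hJ : ContDiff ℝ 1 J) (hJ0 : ∀ x, 0 ≤ J x)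
    (hJsupp : tsupport J = Icc (-δ) δ) (hm : 0 < sInf (convol J J '' Icc (-δ) δ))
    (hφ : Continuous φ) (hφ0 : ∀ x, 0 ≤ φ x) (x : ℝ) :
    |convol (deriv J) φ x| ≤ CJconst J δ * convol J (convol J φ) x := by
  have hJc := hasCompactSupport_of_tsupport_eq_Icc hJsupp
  have hJJc : HasCompactSupport (convol J J) := hJc.convolution (ContinuousLinearMap.mul ℝ ℝ) hJc
  have hJJ : Continuous (convol J J) := continuous_convol hJc hJ.continuous hJ.continuous
  have hJ' : Continuous (deriv J) := hJ.continuous_deriv le_rfl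
  calc |convol (deriv J) φ x| ≤ ∫ y, |deriv J y| * φ (x - y) := by
        refine (abs_integral_le_integral_abs).trans_eq (integral_congr_ae (ae_of_all _ fun y => ?_))
        simp only [abs_mul, abs_of_nonneg (hφ0 _)]
    _ ≤ ∫ y, CJconst J δ * (convol J J y * φ (x - y)) := by
        refine integral_mono (integrable_mul_comp_sub hJc.deriv.abs hJ'.abs hφ x)
          ((integrable_mul_comp_sub hJJc hJJ hφ x).const_mul _) fun y => ?_
        rw [← mul_assoc]
        exact mul_le_mul_of_nonneg_right
          (abs_deriv_le_CJconst_mul_convol_self hJ hJ0 hJsupp hm y) (hφ0 _)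
    _ = CJconst J δ * convol J (convol J φ) x := by
        rw [integral_const_mul, ← convol_convol_assoc hJc hJ.continuous hJc hJ.continuous hφ]
        rfl

lemma convol_convol_le_of_eq_on_Ici {a φ : ℝ → ℝ} {am lam b x : ℝ} (hJ : Continuous J)
    (hJ0 : ∀ x, 0 ≤ J x) (hJsupp : tsupport J = Icc (-δ) δ) (ham : ∀ y, am ≤ a y)
    (hφ : Continuous φ) (hφ0 : ∀ x, 0 ≤ φ x)
    (heq : ∀ y, b ≤ y → convol J φ y = (1 + lam - a y) * φ y) (hx : b + δ ≤ x) :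
    convol J (convol J φ) x ≤ (1 + lam - am) * convol J φ x := by
  have hJc := hasCompactSupport_of_tsupport_eq_Icc hJsupp
  rw [← convol_const_mul]
  refine convol_le_convol_of_le_on_tsupport hJc hJ hJ0 (continuous_convol hJc hJ hφ)
    (continuous_const.mul hφ) x fun z hz => ?_
  rw [hJsupp] at hz
  rw [heq _ (by linarith [hz.2])]
  exact mul_le_mul_of_nonneg_right (by linarith [ham (x - z)]) (hφ0 _)

end Kernel

lemma le_exp_mul_abs_sub_mul_of_abs_deriv_le {f f' : ℝ → ℝ} {s : Set ℝ} {C : ℝ}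
    (hs : Convex ℝ s) (hf : ∀ z ∈ s, HasDerivWithinAt f (f' z) s z) (hpos : ∀ z ∈ s, 0 < f z)
    (hbound : ∀ z ∈ s, |f' z| ≤ C * f z) {x y : ℝ} (hx : x ∈ s) (hy : y ∈ s) :
    f y ≤ Real.exp (C * |x - y|) * f x := by
  have hlog : ∀ z ∈ s, HasDerivWithinAt (fun w => Real.log (f w)) (f' z / f z) s z :=
    fun z hz => (hf z hz).log (hpos z hz).ne'
  have hlog_bound : ∀ z ∈ s, ‖f' z / f z‖ ≤ C := fun z hz => by
    rw [Real.norm_eq_abs, abs_div, abs_of_pos (hpos z hz), div_le_iff₀ (hpos z hz)]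
    exact hbound z hz
  have hmvt := hs.norm_image_sub_le_of_norm_hasDerivWithin_le hlog hlog_bound hx hy
  rw [Real.norm_eq_abs, Real.norm_eq_abs, abs_sub_comm y] at hmvt
  calc f y = Real.exp (Real.log (f y) - Real.log (f x)) * f x := by
        rw [Real.exp_sub, Real.exp_log (hpos y hy), Real.exp_log (hpos x hx),
          div_mul_cancel₀ _ (hpos x hx).ne']
    _ ≤ Real.exp (C * |x - y|) * f x := by
        gcongr
        · exact (hpos x hx).le
        · exact (le_abs_self _).trans hmvt

theorem stmt3_general (J a φ : ℝ → ℝ) (δ am ap lam b : ℝ) (hδ : 0 < δ)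
    (hJC1 : ContDiff ℝ 1 J) (hJnonneg : ∀ x, 0 ≤ J x)
    (hJeven : ∀ x, J (-x) = J x) (hJanti : AntitoneOn J (Set.Ici 0))
    (hJsupp : tsupport J = Set.Icc (-δ) δ)
    (ham : IsGLB (Set.range a) am) (hap : IsLUB (Set.range a) ap)
    (hlam : ap < lam)
    (hφC : Continuous φ) (hφpos : ∀ x, 0 < φ x)
    (heq : ∀ x, b ≤ x → convol J φ x = (1 + lam - a x) * φ x) :
    (∀ x, b + δ ≤ x → DifferentiableAt ℝ (convol J φ) x ∧
      |deriv (convol J φ) x| ≤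
        CJconst J δ * (1 + lam - am) * convol J φ x) ∧
    (∀ x y, b + δ ≤ x → b + δ ≤ y →
      convol J φ y ≤
        Real.exp (CJconst J δ * (1 + lam - am) * |x - y|) * convol J φ x) := by
  have hm := sInf_convol_self_image_pos hδ hJC1.continuous hJnonneg hJeven hJanti hJsupp
  have hφ0 : ∀ x, 0 ≤ φ x := fun x => (hφpos x).le
  have hderiv : ∀ x, HasDerivAt (convol J φ) (convol (deriv J) φ x) x :=
    hasDerivAt_convol (hasCompactSupport_of_tsupport_eq_Icc hJsupp) hJC1 hφC
  have hpos : ∀ x, b ≤ x → 0 < convol J φ x := fun x hx => by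
    rw [heq x hx]
    exact mul_pos (by linarith [hap.1 ⟨x, rfl⟩]) (hφpos x)
  have hbound : ∀ x, b + δ ≤ x →
      |convol (deriv J) φ x| ≤ CJconst J δ * (1 + lam - am) * convol J φ x := fun x hx =>
    calc |convol (deriv J) φ x| ≤ CJconst J δ * convol J (convol J φ) x :=
          abs_convol_deriv_le hJC1 hJnonneg hJsupp hm hφC hφ0 x
      _ ≤ CJconst J δ * ((1 + lam - am) * convol J φ x) :=
          mul_le_mul_of_nonneg_left (convol_convol_le_of_eq_on_Ici hJC1.continuous hJnonneg
            hJsupp (fun y => ham.1 ⟨y, rfl⟩) hφC hφ0 heq hx) (CJconst_nonneg hJnonneg δ)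
      _ = CJconst J δ * (1 + lam - am) * convol J φ x := by ring
  refine ⟨fun x hx => ⟨(hderiv x).differentiableAt, (hderiv x).deriv ▸ hbound x hx⟩,
    fun x y hx hy => ?_⟩
  exact le_exp_mul_abs_sub_mul_of_abs_deriv_le (convex_Ici (b + δ))
    (fun z _ => (hderiv z).hasDerivWithinAt) (fun z hz => hpos z (by linarith [mem_Ici.1 hz]))
    hbound hx hy

/-- derivative bound `|(J*φ)′(x)| ≤ C (J*φ)(x)` for `x ≥ b + δ`, with
`C = C_J (1 + λ − a_−)`, and the resulting Harnack bound
`(J*φ)(y) ≤ e^{C|x−y|} (J*φ)(x)` on `[b+δ, ∞)`. -/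
theorem stmt3 (J a φ : ℝ → ℝ) (δ am ap lam b : ℝ) (hδ : 0 < δ)
    (hJC1 : ContDiff ℝ 1 J) (hJnonneg : ∀ x, 0 ≤ J x)
    (hJeven : ∀ x, J (-x) = J x) (hJanti : AntitoneOn J (Set.Ici 0))
    (hJsupp : tsupport J = Set.Icc (-δ) δ) (hJint : (∫ y, J y) = 1)
    (haC : Continuous a)
    (ham : IsGLB (Set.range a) am) (hap : IsLUB (Set.range a) ap)
    (hlam : ap < lam)
    (hφC : Continuous φ) (hφpos : ∀ x, 0 < φ x)
    (heq : ∀ x, b ≤ x → convol J φ x = (1 + lam - a x) * φ x) :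
    (∀ x, b + δ ≤ x → DifferentiableAt ℝ (convol J φ) x ∧
      |deriv (convol J φ) x| ≤
        CJconst J δ * (1 + lam - am) * convol J φ x) ∧
    (∀ x y, b + δ ≤ x → b + δ ≤ y →
      convol J φ y ≤
        Real.exp (CJconst J δ * (1 + lam - am) * |x - y|) * convol J φ x) :=
  stmt3_general J a φ δ am ap lam b hδ hJC1 hJnonneg hJeven hJanti hJsupp ham hap hlam hφC hφpos heq
end

section
/- Let J satisfy (J), let a : ℝ → ℝ be bounded and continuous with a_− := inf a, a_+ := sup a, let λ > a_+, and let φ > 0 be continuous on ℝ, satisfy (J*φ)(x) = (1 + λ − a(x))φ(x) for all x ≥ b, and lim_{x→∞} φ(x) = 0. Then there exist constants C = C(J, λ−a_−) > 0 and m = m(J, λ−a_−, λ−a_+) > 0 such that (J*φ)(y) ≤ (C/m) e^{−m(y−x)} (J*φ)(x) whenever y ≥ x ≥ b + δ; one may take C = C_J(1+λ−a_−) with C_J := ‖J′‖_∞ / inf_{x∈[−δ,δ]}(J*J)(x), and m = δ^{−1} e^{−Cδ} (λ−a_+)/(1+λ−a_+). -/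
/-!
Write `ψ = J * φ`, `u x = ∫_{(x, ∞)} φ`, `q = 1 + λ - a₊ > 1` and `Q = 1 + λ - a₋`; on `[b, ∞)`
the equation gives `q φ ≤ ψ ≤ Q φ`. Integrating `q φ ≤ ψ` over `[x, R]`, with `∫ J = 1` and
`supp J ⊆ [-δ, δ]`, gives `q ∫_x^R φ ≤ ∫_{x-δ}^{R+δ} φ`. As `φ → 0` this makes `φ` integrable
at `+∞` and then `q u x ≤ u (x - δ)`: the tail mass decays geometrically along steps of length
`δ`. Pointwise, `ψ y ≤ J 0 · u (y - δ)`, while `J * ψ = (J * J) * φ` yields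
`inf_{[-δ, δ]} (J * J) · ∫_{x-δ}^{x+δ} φ ≤ Q ψ x`, whose left side is at least
`(1 - 1/q) u (x - δ)`. Comparing the two after `⌊(y - x)/δ⌋` steps, the bounds
`inf (J * J) ≤ J 0 ≤ ‖J'‖_∞ δ` and `1 - 1/q ≤ log q` turn the geometric factor into the
stated exponential.
-/

open MeasureTheory Filter Real Set

open Topology
open scoped Convolution

section Convolution

variable {J K φ : ℝ → ℝ}

theorem convol_eq_convolution (J φ : ℝ → ℝ) :
    convol J φ = J ⋆[ContinuousLinearMap.mul ℝ ℝ] φ := by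
  ext x
  simp [convol, convolution_def]

theorem integrable_mul_comp_sub_s4 (hJc : Continuous J) (hJcs : HasCompactSupport J)
    (hφc : Continuous φ) (x : ℝ) : Integrable fun w => J w * φ (x - w) :=
  (hJc.mul (hφc.comp (continuous_sub_left x))).integrable_of_hasCompactSupport hJcs.mul_right

theorem continuous_convol_s4 (hJc : Continuous J) (hJcs : HasCompactSupport J)
    (hφc : Continuous φ) : Continuous (convol J φ) := by
  rw [convol_eq_convolution]
  exact hJcs.continuous_convolution_left _ hJc hφc.locallyIntegrable

theorem hasCompactSupport_convol (hJcs : HasCompactSupport J) (hφcs : HasCompactSupport φ) :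
    HasCompactSupport (convol J φ) := by
  rw [convol_eq_convolution]
  exact hJcs.convolution _ hφcs

theorem convol_nonneg_s4 (hJ0 : ∀ x, 0 ≤ J x) (hφ0 : ∀ x, 0 ≤ φ x) (x : ℝ) : 0 ≤ convol J φ x :=
  integral_nonneg fun w => mul_nonneg (hJ0 w) (hφ0 _)

theorem convol_assoc (hJc : Continuous J) (hJcs : HasCompactSupport J) (hKc : Continuous K)
    (hKcs : HasCompactSupport K) (hφc : Continuous φ) (x : ℝ) :
    convol (convol J K) φ x = convol J (convol K φ) x := by
  simp only [convol_eq_convolution]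
  refine convolution_assoc' _ _ _ _ (fun a b c => mul_assoc a b c)
    (Eventually.of_forall (hJcs.convolutionExists_left _ hJc hKc.locallyIntegrable))
    (Eventually.of_forall (hKcs.convolutionExists_left _ hKc hφc.locallyIntegrable)) ?_
  have hcs : HasCompactSupport (Function.uncurry fun t s => J s * (K (t - s) * φ (x - t))) := by
    refine HasCompactSupport.intro ((hJcs.prod hKcs).image
      (continuous_add.prodMk continuous_fst : Continuous fun p : ℝ × ℝ => (p.1 + p.2, p.1))) ?_
    intro p hp
    by_contra h
    exact hp ⟨(p.2, p.1 - p.2), ⟨subset_tsupport _ (left_ne_zero_of_mul h),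
      subset_tsupport _ (left_ne_zero_of_mul (right_ne_zero_of_mul h))⟩, by simp⟩
  exact (by fun_prop : Continuous (Function.uncurry fun t s => J s * (K (t - s) * φ (x - t))))
    |>.integrable_of_hasCompactSupport hcs

end Convolution

section Kernel

variable {J : ℝ → ℝ} {δ : ℝ}

theorem apply_abs_of_even (hJeven : ∀ x, J (-x) = J x) (w : ℝ) : J |w| = J w := by
  rcases le_total 0 w with h | h
  · rw [abs_of_nonneg h]
  · rw [abs_of_nonpos h, hJeven]

theorem apply_le_apply_zero (hJeven : ∀ x, J (-x) = J x) (hJanti : AntitoneOn J (Ici 0))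
    (w : ℝ) : J w ≤ J 0 := by
  rw [← apply_abs_of_even hJeven w]
  exact hJanti self_mem_Ici (abs_nonneg w) (abs_nonneg w)

theorem apply_eq_zero_of_notMem_Icc (hJsupp : tsupport J = Icc (-δ) δ) {w : ℝ}
    (hw : w ∉ Icc (-δ) δ) : J w = 0 :=
  image_eq_zero_of_notMem_tsupport (hJsupp ▸ hw)

theorem apply_right_endpoint_eq_zero (hJc : Continuous J)
    (hJsupp : tsupport J = Icc (-δ) δ) : J δ = 0 := by
  have hzero : Ioi δ ⊆ {x | J x = 0} := fun x hx =>
    apply_eq_zero_of_notMem_Icc hJsupp fun h => (not_le.2 hx) h.2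
  exact (isClosed_eq hJc continuous_const).closure_subset_iff.2 hzero
    (by rw [closure_Ioi]; exact self_mem_Ici)

theorem apply_pos_of_abs_lt (hJnonneg : ∀ x, 0 ≤ J x) (hJeven : ∀ x, J (-x) = J x)
    (hJanti : AntitoneOn J (Ici 0)) (hJsupp : tsupport J = Icc (-δ) δ) {w : ℝ}
    (hw : |w| < δ) : 0 < J w := by
  rw [← apply_abs_of_even hJeven w]
  refine (hJnonneg _).lt_of_ne fun hzero => ?_
  -- `J` would vanish outside `[-|w|, |w|]`, so its support could not reach `δ`
  have hsupp : Function.support J ⊆ Icc (-|w|) |w| := fun t ht => by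
    by_contra ht'
    have hlt : |w| < |t| := by
      rw [mem_Icc, not_and_or, not_le, not_le] at ht'
      rcases ht' with h | h
      · linarith [neg_le_abs t]
      · linarith [le_abs_self t]
    refine ht (le_antisymm ?_ (hJnonneg t))
    rw [← apply_abs_of_even hJeven t, hzero]
    exact hJanti (abs_nonneg w) (abs_nonneg t) hlt.le
  have hδmem : δ ∈ Icc (-|w|) |w| := closure_minimal hsupp isClosed_Icc
    (show δ ∈ tsupport J from hJsupp ▸ right_mem_Icc.2 (by linarith [abs_nonneg w]))
  linarith [hδmem.2]

theorem apply_zero_le_iSup_abs_deriv_mul (hδ : 0 < δ) (hJC1 : ContDiff ℝ 1 J)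
    (hJsupp : tsupport J = Icc (-δ) δ) : J 0 ≤ (⨆ y, |deriv J y|) * δ := by
  have hJcs : HasCompactSupport J := by rw [HasCompactSupport, hJsupp]; exact isCompact_Icc
  have hbdd : BddAbove (range fun y => |deriv J y|) :=
    ((hJC1.continuous_deriv le_rfl).abs).bddAbove_range_of_hasCompactSupport hJcs.deriv.abs
  have hlip := convex_univ.norm_image_sub_le_of_norm_deriv_le (f := J) (x := δ) (y := 0)
    (fun x _ => (hJC1.differentiable one_ne_zero x)) (fun x _ => le_ciSup hbdd x)
    trivial trivial
  rw [apply_right_endpoint_eq_zero hJC1.continuous hJsupp, sub_zero, zero_sub, norm_neg,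
    Real.norm_eq_abs, Real.norm_eq_abs, abs_of_pos hδ] at hlip
  exact (le_abs_self _).trans hlip

end Kernel

theorem intervalIntegral_le_integral_Ioi {φ : ℝ → ℝ} (hφ0 : ∀ x, 0 ≤ φ x) {a b : ℝ}
    (hab : a ≤ b) (hint : IntegrableOn φ (Ioi a)) :
    ∫ t in a..b, φ t ≤ ∫ t in Ioi a, φ t := by
  rw [← intervalIntegral.integral_Ioi_sub_Ioi hint hab, sub_le_self_iff]
  exact setIntegral_nonneg measurableSet_Ioi fun t _ => hφ0 t

section TailMass

variable {J φ : ℝ → ℝ} {δ q b : ℝ}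

theorem setIntegral_Ioc_convol (hJc : Continuous J) (hJzero : ∀ w ∉ Icc (-δ) δ, J w = 0)
    (hφc : Continuous φ) {x R : ℝ} (hxR : x ≤ R) :
    ∫ t in Ioc x R, convol J φ t = ∫ w, J w * ∫ u in (x - w)..(R - w), φ u := by
  have hint : Integrable (fun p : ℝ × ℝ => J p.2 * φ (p.1 - p.2))
      ((volume.restrict (Ioc x R)).prod volume) := by
    rw [Measure.restrict_prod_eq_prod_univ]
    refine IntegrableOn.of_forall_sdiff_eq_zero (s := Icc x R ×ˢ Icc (-δ) δ) ?_
      (measurableSet_Ioc.prod MeasurableSet.univ) ?_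
    · exact (by fun_prop : Continuous fun p : ℝ × ℝ => J p.2 * φ (p.1 - p.2)).continuousOn
        |>.integrableOn_compact (isCompact_Icc.prod isCompact_Icc)
    · rintro p ⟨⟨hp, -⟩, hpK⟩
      have hw : p.2 ∉ Icc (-δ) δ := fun hw => hpK ⟨Ioc_subset_Icc_self hp, hw⟩
      rw [hJzero _ hw, zero_mul]
  refine (integral_integral_swap hint).trans (integral_congr_ae (Eventually.of_forall fun w => ?_))
  simp only
  rw [integral_const_mul, ← intervalIntegral.integral_of_le hxR,
    intervalIntegral.integral_comp_sub_right (fun u => φ u)]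

theorem mul_intervalIntegral_le_of_le_convol (hJc : Continuous J) (hJnonneg : ∀ x, 0 ≤ J x)
    (hJzero : ∀ w ∉ Icc (-δ) δ, J w = 0) (hJint : ∫ w, J w = 1) (hφc : Continuous φ)
    (hφ0 : ∀ x, 0 ≤ φ x) (hsub : ∀ t, b ≤ t → q * φ t ≤ convol J φ t) {x R : ℝ}
    (hbx : b ≤ x) (hxR : x ≤ R) :
    q * ∫ t in x..R, φ t ≤ ∫ t in (x - δ)..(R + δ), φ t := by
  set S := ∫ t in (x - δ)..(R + δ), φ t
  have hJcs : HasCompactSupport J := HasCompactSupport.intro isCompact_Icc hJzero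
  have hslice : ∀ w, J w * ∫ u in (x - w)..(R - w), φ u ≤ J w * S := fun w => by
    by_cases hw : w ∈ Icc (-δ) δ
    · refine mul_le_mul_of_nonneg_left (intervalIntegral.integral_mono_interval ?_ ?_ ?_
        (Eventually.of_forall fun t => hφ0 t) (hφc.intervalIntegrable _ _)) (hJnonneg w)
      all_goals linarith [hw.1, hw.2]
    · rw [hJzero w hw, zero_mul, zero_mul]
  calc q * ∫ t in x..R, φ t = ∫ t in Ioc x R, q * φ t := by
        rw [intervalIntegral.integral_of_le hxR, integral_const_mul]
    _ ≤ ∫ t in Ioc x R, convol J φ t :=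
        setIntegral_mono_on (continuous_const.mul hφc).integrableOn_Ioc
          (continuous_convol_s4 hJc hJcs hφc).integrableOn_Ioc measurableSet_Ioc
          fun t ht => hsub t (hbx.trans ht.1.le)
    _ = ∫ w, J w * ∫ u in (x - w)..(R - w), φ u := setIntegral_Ioc_convol hJc hJzero hφc hxR
    _ ≤ ∫ w, J w * S :=
        integral_mono_of_nonneg (Eventually.of_forall fun w => mul_nonneg (hJnonneg w)
          (intervalIntegral.integral_nonneg (by linarith) fun t _ => hφ0 t))
          ((hJc.integrable_of_hasCompactSupport hJcs).mul_const S) (Eventually.of_forall hslice)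
    _ = S := by rw [integral_mul_const, hJint, one_mul]

theorem integrableOn_Ioi_of_le_convol (hδ : 0 ≤ δ) (hJc : Continuous J)
    (hJnonneg : ∀ x, 0 ≤ J x) (hJzero : ∀ w ∉ Icc (-δ) δ, J w = 0) (hJint : ∫ w, J w = 1)
    (hφc : Continuous φ) (hφ0 : ∀ x, 0 ≤ φ x) (hsub : ∀ t, b ≤ t → q * φ t ≤ convol J φ t)
    (hq : 1 < q) (hφtop : Tendsto φ atTop (𝓝 0)) (x : ℝ) : IntegrableOn φ (Ioi x) := by
  wlog hbx : b ≤ x generalizing x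
  · rw [← Ioc_union_Ioi_eq_Ioi (le_max_left x b)]
    exact hφc.integrableOn_Ioc.union (this _ (le_max_right x b))
  obtain ⟨R₀, hR₀⟩ := eventually_atTop.1 (hφtop.eventually_le_const zero_lt_one)
  -- the strip estimate on `[x, R]` leaves only the two boundary layers, each of mass `O(1)`
  refine integrableOn_Ioi_of_intervalIntegral_norm_bounded
    (((∫ t in (x - δ)..x, φ t) + δ) / (q - 1)) x (fun R => hφc.integrableOn_Ioc) tendsto_id ?_
  filter_upwards [eventually_ge_atTop (max x R₀)] with R hR
  have hxR : x ≤ R := (le_max_left _ _).trans hR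
  have hstrip := mul_intervalIntegral_le_of_le_convol hJc hJnonneg hJzero hJint hφc hφ0 hsub
    hbx hxR
  have hsplit : ∫ t in (x - δ)..(R + δ), φ t
      = (∫ t in (x - δ)..x, φ t) + (∫ t in x..R, φ t) + ∫ t in R..(R + δ), φ t := by
    rw [intervalIntegral.integral_add_adjacent_intervals (hφc.intervalIntegrable _ _)
      (hφc.intervalIntegrable _ _), intervalIntegral.integral_add_adjacent_intervals
      (hφc.intervalIntegrable _ _) (hφc.intervalIntegrable _ _)]
  have hlayer : ∫ t in R..(R + δ), φ t ≤ δ := by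
    have := intervalIntegral.norm_integral_le_of_norm_le_const (a := R) (b := R + δ) (C := 1)
      (f := φ) fun t ht => by
        rw [uIoc_of_le (by linarith)] at ht
        rw [Real.norm_of_nonneg (hφ0 t)]
        exact hR₀ t (((le_max_right _ _).trans hR).trans ht.1.le)
    rw [add_sub_cancel_left, one_mul, abs_of_nonneg hδ] at this
    exact (le_abs_self _).trans (Real.norm_eq_abs _ ▸ this)
  simp_rw [Real.norm_of_nonneg (hφ0 _)]
  rw [id, le_div_iff₀ (by linarith)]
  linarith

theorem mul_integral_Ioi_le_of_le_convol (hδ : 0 ≤ δ) (hJc : Continuous J)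
    (hJnonneg : ∀ x, 0 ≤ J x) (hJzero : ∀ w ∉ Icc (-δ) δ, J w = 0) (hJint : ∫ w, J w = 1)
    (hφc : Continuous φ) (hφ0 : ∀ x, 0 ≤ φ x) (hsub : ∀ t, b ≤ t → q * φ t ≤ convol J φ t)
    (hq : 1 < q) (hφtop : Tendsto φ atTop (𝓝 0)) {x : ℝ} (hbx : b ≤ x) :
    q * ∫ t in Ioi x, φ t ≤ ∫ t in Ioi (x - δ), φ t := by
  have hint := integrableOn_Ioi_of_le_convol hδ hJc hJnonneg hJzero hJint hφc hφ0 hsub hq hφtop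
  refine le_of_tendsto ((intervalIntegral_tendsto_integral_Ioi x (hint x) tendsto_id).const_mul q)
    ?_
  filter_upwards [eventually_ge_atTop x] with R hxR
  exact (mul_intervalIntegral_le_of_le_convol hJc hJnonneg hJzero hJint hφc hφ0 hsub hbx
    hxR).trans (intervalIntegral_le_integral_Ioi hφ0 (by linarith) (hint _))

theorem pow_mul_integral_Ioi_le_of_le_convol (hδ : 0 ≤ δ) (hJc : Continuous J)
    (hJnonneg : ∀ x, 0 ≤ J x) (hJzero : ∀ w ∉ Icc (-δ) δ, J w = 0) (hJint : ∫ w, J w = 1)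
    (hφc : Continuous φ) (hφ0 : ∀ x, 0 ≤ φ x) (hsub : ∀ t, b ≤ t → q * φ t ≤ convol J φ t)
    (hq : 1 < q) (hφtop : Tendsto φ atTop (𝓝 0)) {x : ℝ} (hbx : b ≤ x + δ) (k : ℕ) :
    q ^ k * ∫ t in Ioi (x + k * δ), φ t ≤ ∫ t in Ioi x, φ t := by
  induction k with
  | zero => simp
  | succ k ih =>
    have hstep := mul_integral_Ioi_le_of_le_convol hδ hJc hJnonneg hJzero hJint hφc hφ0 hsub hq
      hφtop (x := x + k * δ + δ) (by nlinarith [k.cast_nonneg (α := ℝ)])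
    rw [add_sub_cancel_right] at hstep
    calc q ^ (k + 1) * ∫ t in Ioi (x + (k + 1 : ℕ) * δ), φ t
        = q ^ k * (q * ∫ t in Ioi (x + k * δ + δ), φ t) := by
          rw [pow_succ, Nat.cast_succ, add_one_mul, ← add_assoc, mul_assoc]
      _ ≤ q ^ k * ∫ t in Ioi (x + k * δ), φ t :=
          mul_le_mul_of_nonneg_left hstep (pow_nonneg (by linarith) k)
      _ ≤ ∫ t in Ioi x, φ t := ih

theorem mul_integral_Ioi_le_intervalIntegral_of_le_convol (hδ : 0 ≤ δ) (hJc : Continuous J)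
    (hJnonneg : ∀ x, 0 ≤ J x) (hJzero : ∀ w ∉ Icc (-δ) δ, J w = 0) (hJint : ∫ w, J w = 1)
    (hφc : Continuous φ) (hφ0 : ∀ x, 0 ≤ φ x) (hsub : ∀ t, b ≤ t → q * φ t ≤ convol J φ t)
    (hq : 1 < q) (hφtop : Tendsto φ atTop (𝓝 0)) {x : ℝ} (hbx : b ≤ x) :
    (q - 1) / q * ∫ t in Ioi (x - δ), φ t ≤ ∫ t in (x - δ)..(x + δ), φ t := by
  have hint := integrableOn_Ioi_of_le_convol hδ hJc hJnonneg hJzero hJint hφc hφ0 hsub hq hφtop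
  have hstep := mul_integral_Ioi_le_of_le_convol hδ hJc hJnonneg hJzero hJint hφc hφ0 hsub hq
    hφtop hbx
  have hmono : ∫ t in Ioi (x + δ), φ t ≤ ∫ t in Ioi x, φ t :=
    setIntegral_mono_set (hint x) (Eventually.of_forall fun t => hφ0 t)
      (Ioi_subset_Ioi (by linarith)).eventuallyLE
  have hdiv : ∫ t in Ioi x, φ t ≤ (∫ t in Ioi (x - δ), φ t) / q := by
    rw [le_div_iff₀ (by linarith)]
    linarith
  have hfrac : (q - 1) / q * ∫ t in Ioi (x - δ), φ t
      = (∫ t in Ioi (x - δ), φ t) - (∫ t in Ioi (x - δ), φ t) / q := by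
    field_simp
  rw [← intervalIntegral.integral_Ioi_sub_Ioi (hint _) (by linarith)]
  linarith

end TailMass

section Bounds

variable {J φ : ℝ → ℝ} {δ : ℝ}

theorem bddBelow_convol_self_image (hJnonneg : ∀ x, 0 ≤ J x) (s : Set ℝ) :
    BddBelow (convol J J '' s) :=
  ⟨0, forall_mem_image.2 fun z _ => convol_nonneg_s4 hJnonneg hJnonneg z⟩

theorem sInf_convol_self_nonneg (hJnonneg : ∀ x, 0 ≤ J x) (s : Set ℝ) :
    0 ≤ sInf (convol J J '' s) :=
  Real.sInf_nonneg (forall_mem_image.2 fun z _ => convol_nonneg_s4 hJnonneg hJnonneg z)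

theorem sInf_convol_self_pos (hJc : Continuous J) (hJnonneg : ∀ x, 0 ≤ J x)
    (hJeven : ∀ x, J (-x) = J x) (hJanti : AntitoneOn J (Ici 0))
    (hJsupp : tsupport J = Icc (-δ) δ) (hδ : 0 < δ) :
    0 < sInf (convol J J '' Icc (-δ) δ) := by
  have hJcs : HasCompactSupport J := by rw [HasCompactSupport, hJsupp]; exact isCompact_Icc
  obtain ⟨z, hz, hmin⟩ := isCompact_Icc.exists_sInf_image_eq (nonempty_Icc.2 (by linarith : -δ ≤ δ))
    (continuous_convol_s4 hJc hJcs hJc).continuousOn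
  have hhalf : 0 < J (z / 2) :=
    apply_pos_of_abs_lt hJnonneg hJeven hJanti hJsupp
      (by rw [abs_div, abs_two]; linarith [abs_le.2 hz])
  rw [hmin]
  refine (hJc.mul (hJc.comp (continuous_sub_left z)))
    |>.integral_pos_of_hasCompactSupport_nonneg_nonzero (x := z / 2) hJcs.mul_right
      (fun w => mul_nonneg (hJnonneg w) (hJnonneg _)) ?_
  rw [sub_half]
  exact (mul_pos hhalf hhalf).ne'

theorem sInf_convol_self_le_apply_zero (hJc : Continuous J) (hJcs : HasCompactSupport J)
    (hJnonneg : ∀ x, 0 ≤ J x) (hJeven : ∀ x, J (-x) = J x) (hJanti : AntitoneOn J (Ici 0))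
    (hJint : ∫ w, J w = 1) (hδ : 0 ≤ δ) :
    sInf (convol J J '' Icc (-δ) δ) ≤ J 0 :=
  calc sInf (convol J J '' Icc (-δ) δ) ≤ convol J J 0 :=
        csInf_le (bddBelow_convol_self_image hJnonneg _) ⟨0, ⟨by linarith, hδ⟩, rfl⟩
    _ = ∫ w, J w * J w := by simp only [convol, zero_sub, hJeven]
    _ ≤ ∫ w, J 0 * J w :=
        integral_mono (by simpa using integrable_mul_comp_sub_s4 hJc hJcs (hJc.comp continuous_neg) 0)
          ((hJc.integrable_of_hasCompactSupport hJcs).const_mul _)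
          fun w => mul_le_mul_of_nonneg_right (apply_le_apply_zero hJeven hJanti w) (hJnonneg w)
    _ = J 0 := by rw [integral_const_mul, hJint, mul_one]

theorem convol_le_mul_intervalIntegral {M : ℝ} (hJc : Continuous J)
    (hJzero : ∀ w ∉ Icc (-δ) δ, J w = 0) (hJle : ∀ w, J w ≤ M) (hφc : Continuous φ)
    (hφ0 : ∀ x, 0 ≤ φ x) (hδ : 0 ≤ δ) (y : ℝ) :
    convol J φ y ≤ M * ∫ t in (y - δ)..(y + δ), φ t := by
  calc convol J φ y = ∫ w in Icc (-δ) δ, J w * φ (y - w) :=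
        (setIntegral_eq_integral_of_forall_compl_eq_zero fun w hw => by
          rw [hJzero w hw, zero_mul]).symm
    _ ≤ ∫ w in Icc (-δ) δ, M * φ (y - w) :=
        setIntegral_mono_on (by fun_prop : Continuous fun w => J w * φ (y - w)).integrableOn_Icc
          (by fun_prop : Continuous fun w => M * φ (y - w)).integrableOn_Icc measurableSet_Icc
          fun w _ => mul_le_mul_of_nonneg_right (hJle w) (hφ0 _)
    _ = M * ∫ t in (y - δ)..(y + δ), φ t := by
        rw [integral_Icc_eq_integral_Ioc, ← intervalIntegral.integral_of_le (by linarith),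
          intervalIntegral.integral_const_mul, intervalIntegral.integral_comp_sub_left
          (fun t => φ t), sub_neg_eq_add]

theorem convol_le_mul_convol_of_le {ψ : ℝ → ℝ} {Q b : ℝ} (hJc : Continuous J)
    (hJnonneg : ∀ x, 0 ≤ J x) (hJzero : ∀ w ∉ Icc (-δ) δ, J w = 0) (hψc : Continuous ψ)
    (hφc : Continuous φ) (hψφ : ∀ t, b ≤ t → ψ t ≤ Q * φ t) {x : ℝ} (hx : b + δ ≤ x) :
    convol J ψ x ≤ Q * convol J φ x := by
  have hJcs : HasCompactSupport J := HasCompactSupport.intro isCompact_Icc hJzero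
  rw [convol, convol, ← integral_const_mul]
  refine integral_mono (integrable_mul_comp_sub_s4 hJc hJcs hψc x)
    ((integrable_mul_comp_sub_s4 hJc hJcs hφc x).const_mul Q) fun w => ?_
  by_cases hw : w ∈ Icc (-δ) δ
  · rw [mul_left_comm]
    exact mul_le_mul_of_nonneg_left (hψφ _ (by linarith [hw.2])) (hJnonneg w)
  · simp [hJzero w hw]

theorem sInf_mul_intervalIntegral_le {Q b : ℝ} (hJc : Continuous J) (hJnonneg : ∀ x, 0 ≤ J x)
    (hJzero : ∀ w ∉ Icc (-δ) δ, J w = 0) (hφc : Continuous φ) (hφ0 : ∀ x, 0 ≤ φ x)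
    (hsup : ∀ t, b ≤ t → convol J φ t ≤ Q * φ t) (hδ : 0 ≤ δ) {x : ℝ} (hx : b + δ ≤ x) :
    sInf (convol J J '' Icc (-δ) δ) * ∫ t in (x - δ)..(x + δ), φ t ≤ Q * convol J φ x := by
  have hJcs : HasCompactSupport J := HasCompactSupport.intro isCompact_Icc hJzero
  have hJJc : Continuous (convol J J) := continuous_convol_s4 hJc hJcs hJc
  calc sInf (convol J J '' Icc (-δ) δ) * ∫ t in (x - δ)..(x + δ), φ t
      = ∫ z in (-δ)..δ, sInf (convol J J '' Icc (-δ) δ) * φ (x - z) := by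
        rw [intervalIntegral.integral_const_mul, intervalIntegral.integral_comp_sub_left
          (fun t => φ t), sub_neg_eq_add]
    _ ≤ ∫ z in (-δ)..δ, convol J J z * φ (x - z) :=
        intervalIntegral.integral_mono_on (by linarith)
          ((continuous_const.mul (hφc.comp (continuous_sub_left x))).intervalIntegrable _ _)
          ((hJJc.mul (hφc.comp (continuous_sub_left x))).intervalIntegrable _ _)
          fun z hz => mul_le_mul_of_nonneg_right
            (csInf_le (bddBelow_convol_self_image hJnonneg _) ⟨z, hz, rfl⟩) (hφ0 _)
    _ ≤ convol (convol J J) φ x := by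
        rw [intervalIntegral.integral_of_le (by linarith)]
        exact setIntegral_le_integral
          (integrable_mul_comp_sub_s4 hJJc (hasCompactSupport_convol hJcs hJcs) hφc x)
          (Eventually.of_forall fun z => mul_nonneg (convol_nonneg_s4 hJnonneg hJnonneg z) (hφ0 _))
    _ = convol J (convol J φ) x := convol_assoc hJc hJcs hJc hJcs hφc x
    _ ≤ Q * convol J φ x := convol_le_mul_convol_of_le hJc hJnonneg hJzero
          (continuous_convol_s4 hJc hJcs hφc) hφc hsup hx

theorem apply_zero_le_CJconst_mul (hδ : 0 < δ) (hJC1 : ContDiff ℝ 1 J)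
    (hJnonneg : ∀ x, 0 ≤ J x) (hJeven : ∀ x, J (-x) = J x) (hJanti : AntitoneOn J (Ici 0))
    (hJsupp : tsupport J = Icc (-δ) δ) :
    J 0 ≤ CJconst J δ * sInf (convol J J '' Icc (-δ) δ) * δ := by
  rw [CJconst, div_mul_cancel₀ _
    (sInf_convol_self_pos hJC1.continuous hJnonneg hJeven hJanti hJsupp hδ).ne']
  exact apply_zero_le_iSup_abs_deriv_mul hδ hJC1 hJsupp

end Bounds

section Decay

variable {J φ : ℝ → ℝ} {δ q Q M b : ℝ}

theorem pow_mul_convol_le_mul_integral_Ioi (hδ : 0 ≤ δ) (hJc : Continuous J)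
    (hJnonneg : ∀ x, 0 ≤ J x) (hJzero : ∀ w ∉ Icc (-δ) δ, J w = 0) (hJint : ∫ w, J w = 1)
    (hJle : ∀ w, J w ≤ M) (hφc : Continuous φ) (hφ0 : ∀ x, 0 ≤ φ x)
    (hsub : ∀ t, b ≤ t → q * φ t ≤ convol J φ t) (hq : 1 < q) (hφtop : Tendsto φ atTop (𝓝 0))
    {x y : ℝ} {k : ℕ} (hbx : b ≤ x) (hxy : x + k * δ ≤ y) :
    q ^ k * convol J φ y ≤ M * ∫ t in Ioi (x - δ), φ t := by
  have hint := integrableOn_Ioi_of_le_convol hδ hJc hJnonneg hJzero hJint hφc hφ0 hsub hq hφtop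
  have hM : 0 ≤ M := (hJnonneg 0).trans (hJle 0)
  have hψy : convol J φ y ≤ M * ∫ t in Ioi (x - δ + k * δ), φ t :=
    calc convol J φ y ≤ M * ∫ t in (y - δ)..(y + δ), φ t :=
          convol_le_mul_intervalIntegral hJc hJzero hJle hφc hφ0 hδ y
      _ ≤ M * ∫ t in Ioi (y - δ), φ t := mul_le_mul_of_nonneg_left
          (intervalIntegral_le_integral_Ioi hφ0 (by linarith) (hint _)) hM
      _ ≤ M * ∫ t in Ioi (x - δ + k * δ), φ t := mul_le_mul_of_nonneg_left
          (setIntegral_mono_set (hint _) (Eventually.of_forall fun t => hφ0 t)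
            (Ioi_subset_Ioi (by linarith)).eventuallyLE) hM
  refine (mul_le_mul_of_nonneg_left hψy (pow_nonneg (by linarith) k)).trans ?_
  rw [mul_left_comm]
  exact mul_le_mul_of_nonneg_left (pow_mul_integral_Ioi_le_of_le_convol hδ hJc hJnonneg hJzero
    hJint hφc hφ0 hsub hq hφtop (by linarith) k) hM

theorem sInf_mul_integral_Ioi_le_mul_convol (hδ : 0 ≤ δ) (hJc : Continuous J)
    (hJnonneg : ∀ x, 0 ≤ J x) (hJzero : ∀ w ∉ Icc (-δ) δ, J w = 0) (hJint : ∫ w, J w = 1)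
    (hφc : Continuous φ) (hφ0 : ∀ x, 0 ≤ φ x) (hsub : ∀ t, b ≤ t → q * φ t ≤ convol J φ t)
    (hsup : ∀ t, b ≤ t → convol J φ t ≤ Q * φ t) (hq : 1 < q) (hφtop : Tendsto φ atTop (𝓝 0))
    {x : ℝ} (hx : b + δ ≤ x) :
    sInf (convol J J '' Icc (-δ) δ) * ((q - 1) / q) * ∫ t in Ioi (x - δ), φ t
      ≤ Q * convol J φ x := by
  rw [mul_assoc]
  exact (mul_le_mul_of_nonneg_left (mul_integral_Ioi_le_intervalIntegral_of_le_convol hδ hJc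
    hJnonneg hJzero hJint hφc hφ0 hsub hq hφtop (by linarith))
    (sInf_convol_self_nonneg hJnonneg _)).trans
    (sInf_mul_intervalIntegral_le hJc hJnonneg hJzero hφc hφ0 hsup hδ hx)

theorem sInf_mul_pow_mul_convol_le (hδ : 0 ≤ δ) (hJc : Continuous J)
    (hJnonneg : ∀ x, 0 ≤ J x) (hJzero : ∀ w ∉ Icc (-δ) δ, J w = 0) (hJint : ∫ w, J w = 1)
    (hJle : ∀ w, J w ≤ M) (hφc : Continuous φ) (hφ0 : ∀ x, 0 ≤ φ x)
    (hsub : ∀ t, b ≤ t → q * φ t ≤ convol J φ t) (hsup : ∀ t, b ≤ t → convol J φ t ≤ Q * φ t)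
    (hq : 1 < q) (hφtop : Tendsto φ atTop (𝓝 0)) {x y : ℝ} {k : ℕ} (hx : b + δ ≤ x)
    (hxy : x + k * δ ≤ y) :
    sInf (convol J J '' Icc (-δ) δ) * ((q - 1) / q) * q ^ k * convol J φ y
      ≤ M * Q * convol J φ x := by
  have hi0 := sInf_convol_self_nonneg hJnonneg (Icc (-δ) δ)
  have hr0 : 0 ≤ (q - 1) / q := div_nonneg (by linarith) (by linarith)
  calc sInf (convol J J '' Icc (-δ) δ) * ((q - 1) / q) * q ^ k * convol J φ y
      ≤ sInf (convol J J '' Icc (-δ) δ) * ((q - 1) / q) * (M * ∫ t in Ioi (x - δ), φ t) := by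
        rw [mul_assoc]
        exact mul_le_mul_of_nonneg_left (pow_mul_convol_le_mul_integral_Ioi hδ hJc hJnonneg hJzero
          hJint hJle hφc hφ0 hsub hq hφtop (by linarith) hxy) (mul_nonneg hi0 hr0)
    _ = M * (sInf (convol J J '' Icc (-δ) δ) * ((q - 1) / q) * ∫ t in Ioi (x - δ), φ t) := by
        ring
    _ ≤ M * (Q * convol J φ x) := mul_le_mul_of_nonneg_left (sInf_mul_integral_Ioi_le_mul_convol
        hδ hJc hJnonneg hJzero hJint hφc hφ0 hsub hsup hq hφtop hx) ((hJnonneg 0).trans (hJle 0))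
    _ = M * Q * convol J φ x := by ring

end Decay

theorem le_decay_coefficient_mul {i J₀ K Q q δ s : ℝ} {k : ℕ} (hi : 0 < i) (hiJ : i ≤ J₀)
    (hJK : J₀ ≤ K * i * δ) (hQ : 1 ≤ Q) (hq : 1 < q) (hδ : 0 < δ) (hs : s ≤ (k + 1) * δ) :
    J₀ * Q ≤ K * Q / (δ⁻¹ * exp (-(K * Q * δ)) * ((q - 1) / q)) *
      exp (-(δ⁻¹ * exp (-(K * Q * δ)) * ((q - 1) / q) * s)) * (i * ((q - 1) / q) * q ^ k) := by
  set r := (q - 1) / q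
  set m := δ⁻¹ * exp (-(K * Q * δ)) * r
  have hq0 : 0 < q := by linarith
  have hr0 : 0 < r := div_pos (by linarith) hq0
  have hr1 : r < 1 := (div_lt_one hq0).2 (by linarith)
  have hKδ : 1 ≤ K * δ := by nlinarith
  have hCδ : 1 ≤ K * Q * δ := by nlinarith
  -- `(q - 1) / q ≤ log q`
  have hpow : exp (r * k) ≤ q ^ k := by
    rw [mul_comm, Real.exp_nat_mul]
    refine pow_le_pow_left₀ (exp_pos r).le ?_ k
    rw [← Real.le_log_iff_exp_le hq0]
    simpa [r, sub_div, div_self hq0.ne'] using Real.one_sub_inv_le_log_of_pos hq0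
  have hms : m * s ≤ r * k + K * Q * δ := by
    have hm : m * ((k + 1) * δ) = exp (-(K * Q * δ)) * (r * (k + 1)) := by
      simp only [m]; field_simp
    have hexp : exp (-(K * Q * δ)) ≤ 1 := exp_le_one_iff.2 (by linarith)
    nlinarith [mul_le_mul_of_nonneg_left hs (by positivity : 0 ≤ m),
      mul_le_of_le_one_left (by positivity : 0 ≤ r * (k + 1)) hexp]
  have hgrowth : 1 ≤ exp (K * Q * δ - m * s) * q ^ k := by
    calc (1 : ℝ) ≤ exp (K * Q * δ - m * s + r * k) := one_le_exp (by linarith)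
      _ = exp (K * Q * δ - m * s) * exp (r * k) := exp_add _ _
      _ ≤ exp (K * Q * δ - m * s) * q ^ k := by gcongr
  calc J₀ * Q ≤ K * i * δ * Q * 1 := by
        rw [mul_one]; exact mul_le_mul_of_nonneg_right hJK (by linarith)
    _ ≤ K * i * δ * Q * (exp (K * Q * δ - m * s) * q ^ k) :=
      mul_le_mul_of_nonneg_left hgrowth (mul_nonneg (by linarith) (by linarith))
    _ = K * Q / m * exp (-(m * s)) * (i * r * q ^ k) := by
      simp only [m, sub_eq_add_neg, exp_add, exp_neg]
      field_simp

theorem stmt4_general (J a φ : ℝ → ℝ) (δ am ap lam b : ℝ) (hδ : 0 < δ)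
    (hJC1 : ContDiff ℝ 1 J) (hJnonneg : ∀ x, 0 ≤ J x)
    (hJeven : ∀ x, J (-x) = J x) (hJanti : AntitoneOn J (Set.Ici 0))
    (hJsupp : tsupport J = Set.Icc (-δ) δ) (hJint : (∫ y, J y) = 1)
    (ham : IsGLB (Set.range a) am) (hap : IsLUB (Set.range a) ap)
    (hlam : ap < lam)
    (hφC : Continuous φ) (hφpos : ∀ x, 0 < φ x)
    (heq : ∀ x, b ≤ x → convol J φ x = (1 + lam - a x) * φ x)
    (hφtop : Tendsto φ atTop (nhds 0)) :
    ∀ x y, b + δ ≤ x → x ≤ y →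
      convol J φ y ≤
        (CJconst J δ * (1 + lam - am)) /
            (δ⁻¹ * Real.exp (-(CJconst J δ * (1 + lam - am) * δ)) *
              ((lam - ap) / (1 + lam - ap))) *
          Real.exp (-(δ⁻¹ * Real.exp (-(CJconst J δ * (1 + lam - am) * δ)) *
              ((lam - ap) / (1 + lam - ap)) * (y - x))) *
          convol J φ x := by
  intro x y hx hxy
  have hJc : Continuous J := hJC1.continuous
  have hJzero : ∀ w ∉ Icc (-δ) δ, J w = 0 := fun w => apply_eq_zero_of_notMem_Icc hJsupp
  have hφ0 : ∀ t, 0 ≤ φ t := fun t => (hφpos t).le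
  have hsub : ∀ t, b ≤ t → (1 + lam - ap) * φ t ≤ convol J φ t := fun t ht => by
    rw [heq t ht]
    exact mul_le_mul_of_nonneg_right (by linarith [hap.1 ⟨t, rfl⟩]) (hφ0 t)
  have hsup : ∀ t, b ≤ t → convol J φ t ≤ (1 + lam - am) * φ t := fun t ht => by
    rw [heq t ht]
    exact mul_le_mul_of_nonneg_right (by linarith [ham.1 ⟨t, rfl⟩]) (hφ0 t)
  obtain ⟨k, hk, hk'⟩ : ∃ k : ℕ, k * δ ≤ y - x ∧ y - x ≤ (k + 1) * δ :=
    ⟨⌊(y - x) / δ⌋₊, (le_div_iff₀ hδ).1 (Nat.floor_le (div_nonneg (by linarith) hδ.le)),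
      (div_le_iff₀ hδ).1 (Nat.lt_floor_add_one _).le⟩
  have hraw := sInf_mul_pow_mul_convol_le hδ.le hJc hJnonneg hJzero hJint
    (apply_le_apply_zero hJeven hJanti) hφC hφ0 hsub hsup (by linarith) hφtop hx
    (by linarith : x + k * δ ≤ y)
  have hi0 := sInf_convol_self_pos hJc hJnonneg hJeven hJanti hJsupp hδ
  have hbound := le_decay_coefficient_mul hi0
    (sInf_convol_self_le_apply_zero hJc (HasCompactSupport.intro isCompact_Icc hJzero) hJnonneg
      hJeven hJanti hJint hδ.le)
    (apply_zero_le_CJconst_mul hδ hJC1 hJnonneg hJeven hJanti hJsupp)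
    (by linarith [ham.1 ⟨b, rfl⟩, hap.1 ⟨b, rfl⟩] : 1 ≤ 1 + lam - am)
    (by linarith : 1 < 1 + lam - ap) hδ hk'
  rw [show lam - ap = 1 + lam - ap - 1 by ring]
  refine le_of_mul_le_mul_left (hraw.trans ?_) (mul_pos (mul_pos hi0 (div_pos (by linarith)
    (by linarith))) (pow_pos (by linarith : (0 : ℝ) < 1 + lam - ap) k))
  linarith [mul_le_mul_of_nonneg_right hbound (convol_nonneg_s4 hJnonneg hφ0 x)]

/-- exponential decay estimate
`(J*φ)(y) ≤ (C/m) e^{−m(y−x)} (J*φ)(x)` for `y ≥ x ≥ b + δ`, with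
`C = C_J(1+λ−a_−)` and `m = δ⁻¹ e^{−Cδ} (λ−a_+)/(1+λ−a_+)`. -/
theorem stmt4 (J a φ : ℝ → ℝ) (δ am ap lam b : ℝ) (hδ : 0 < δ)
    (hJC1 : ContDiff ℝ 1 J) (hJnonneg : ∀ x, 0 ≤ J x)
    (hJeven : ∀ x, J (-x) = J x) (hJanti : AntitoneOn J (Set.Ici 0))
    (hJsupp : tsupport J = Set.Icc (-δ) δ) (hJint : (∫ y, J y) = 1)
    (haC : Continuous a)
    (ham : IsGLB (Set.range a) am) (hap : IsLUB (Set.range a) ap)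
    (hlam : ap < lam)
    (hφC : Continuous φ) (hφpos : ∀ x, 0 < φ x)
    (heq : ∀ x, b ≤ x → convol J φ x = (1 + lam - a x) * φ x)
    (hφtop : Tendsto φ atTop (nhds 0)) :
    ∀ x y, b + δ ≤ x → x ≤ y →
      convol J φ y ≤
        (CJconst J δ * (1 + lam - am)) /
            (δ⁻¹ * Real.exp (-(CJconst J δ * (1 + lam - am) * δ)) *
              ((lam - ap) / (1 + lam - ap))) *
          Real.exp (-(δ⁻¹ * Real.exp (-(CJconst J δ * (1 + lam - am) * δ)) *
              ((lam - ap) / (1 + lam - ap)) * (y - x))) *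
          convol J φ x :=
  stmt4_general J a φ δ am ap lam b hδ hJC1 hJnonneg hJeven hJanti hJsupp hJint ham hap hlam hφC
    hφpos heq hφtop
end

section
/- Let g satisfy (G), let α ∈ (0,1), c_α := α + α^{−1}, and let U : ℝ → (0,1) be a C² solution of U″ + c_α U′ + g(U) = 0 with U′ < 0, lim_{s→−∞} U(s) = 1, lim_{s→∞} U(s) = 0, and lim_{s→∞} e^{αs} U(s) = 1. Define h(v) := U(−α^{−1} log v) for v > 0 and h(0) := 0, and β := 2 + α^{−2}. Then the function ρ(x) := −h″(e^{−x}) is positive on ℝ and satisfies |ρ′(x)| ≤ β ρ(x) for all x ∈ ℝ; in particular, ρ(y) ≤ e^{β|x−y|} ρ(x) for all x, y ∈ ℝ. -/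
/-!
Put `D := g ∘ U + α⁻¹ U′` and `R := -U′ (1 - g′ ∘ U) > 0`. The ODE gives `D′ = R - α⁻¹ D` and
`ρ(x) = α⁻² e^{2x} D(x/α)`, so `ρ′/ρ = 2 + α⁻¹ (R/D - α⁻¹)` and everything reduces to
`0 < D` and `α R / 2 ≤ D`.

Since `(e^{s/α} D)′ = e^{s/α} R > 0`, a point with `D ≤ 0` would force `D`, hence `U′ ≤ α D`,
below a negative constant on a left half-line, and `U` could not stay below `1`.
For the second bound, `W := (α + 2α⁻¹)(-U′) - g ∘ U` has `(e^{(α + 2α⁻¹)s} W)′ ≥ 0` because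
`g′ ≥ -1`, and `W` is bounded below, so `W ≥ 0`. This makes `e^{-s/α}(-U′)`, and then
`e^{-s/α} R`, nonincreasing. Integrating `(e^{t/α} D)′ = e^{2t/α} e^{-t/α} R(t) ≥ e^{2t/α} e^{-s/α} R(s)`
over `t ∈ (-∞, s]` and using `e^{t/α} D(t) > 0` gives `e^{s/α} D(s) ≥ (α/2) e^{s/α} R(s)`.
The two-point estimate is Grönwall's inequality for `log ρ`.
-/

open Filter Real Set Topology

noncomputable def hOf (U : ℝ → ℝ) (α : ℝ) : ℝ → ℝ :=
  fun v => if 0 < v then U (-(α⁻¹ * Real.log v)) else 0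

noncomputable def rhoOf (U : ℝ → ℝ) (α : ℝ) : ℝ → ℝ :=
  fun x => -(deriv (deriv (hOf U α)) (Real.exp (-x)))

lemma tendsto_const_sub_atBot_atTop (s : ℝ) : Tendsto (fun t : ℝ => s - t) atBot atTop := by
  simpa only [sub_eq_add_neg] using tendsto_atTop_add_const_left atBot s tendsto_neg_atBot_atTop

lemma exp_eq_exp_two_mul_mul_exp_neg (x : ℝ) : exp x = exp (2 * x) * exp (-x) := by
  rw [← exp_add]; ring_nf

section ExpWeighted

variable {f : ℝ → ℝ} {m s t : ℝ}

lemma le_exp_mul_sub_mul_of_monotone_exp_mul (hf : Monotone fun t => exp (m * t) * f t)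
    (hts : t ≤ s) : f t ≤ exp (m * (s - t)) * f s := by
  have h := hf hts
  rw [mul_sub, exp_sub, div_mul_eq_mul_div, le_div_iff₀ (exp_pos _)]
  linarith

lemma nonneg_of_monotone_exp_mul_of_bddBelow (hm : 0 < m)
    (hf : Monotone fun t => exp (m * t) * f t) (hbdd : BddBelow (range f)) (s : ℝ) : 0 ≤ f s := by
  by_contra! hs
  obtain ⟨C, hC⟩ := hbdd
  have hbot : Tendsto (fun t => exp (m * (s - t)) * f s) atBot atBot :=
    (tendsto_exp_atTop.comp
      ((tendsto_const_sub_atBot_atTop s).const_mul_atTop hm)).atTop_mul_const_of_neg hs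
  obtain ⟨t, ht, hts⟩ := ((hbot.eventually_lt_atBot C).and (eventually_le_atBot s)).exists
  exact (hC (mem_range_self t)).not_gt ((le_exp_mul_sub_mul_of_monotone_exp_mul hf hts).trans_lt ht)

end ExpWeighted

lemma tendsto_atBot_atTop_of_deriv_le_neg {u : ℝ → ℝ} {c s : ℝ} (hu : Differentiable ℝ u)
    (hc : 0 < c) (h : ∀ t ≤ s, deriv u t ≤ -c) : Tendsto u atBot atTop := by
  have hlin : ∀ t ≤ s, u s + c * (s - t) ≤ u t := by
    intro t ht
    have := (convex_Iic s).image_sub_le_mul_sub_of_deriv_le hu.continuous.continuousOn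
      hu.differentiableOn (fun x hx => h x (interior_subset (s := Iic s) hx)) t ht s self_mem_Iic ht
    linarith
  exact tendsto_atTop_mono' atBot ((eventually_le_atBot s).mono hlin)
    (tendsto_atTop_add_const_left _ _ ((tendsto_const_sub_atBot_atTop s).const_mul_atTop hc))

lemma le_exp_mul_abs_sub_mul_of_abs_deriv_le_s8 {ρ : ℝ → ℝ} {β : ℝ} (hpos : ∀ x, 0 < ρ x)
    (hρ : Differentiable ℝ ρ) (hbound : ∀ x, |deriv ρ x| ≤ β * ρ x) (x y : ℝ) :
    ρ y ≤ exp (β * |x - y|) * ρ x := by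
  have hlog : ∀ z, HasDerivAt (fun t => log (ρ t)) (deriv ρ z / ρ z) z :=
    fun z => (hρ z).hasDerivAt.log (hpos z).ne'
  have hlog' : ∀ z, ‖deriv (fun t => log (ρ t)) z‖ ≤ β := fun z => by
    rw [(hlog z).deriv, Real.norm_eq_abs, abs_div, abs_of_pos (hpos z), div_le_iff₀ (hpos z)]
    exact hbound z
  have hlip := convex_univ.norm_image_sub_le_of_norm_deriv_le
    (fun z _ => (hlog z).differentiableAt) (fun z _ => hlog' z) (mem_univ x) (mem_univ y)
  rw [Real.norm_eq_abs, Real.norm_eq_abs, abs_sub_comm y x] at hlip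
  calc ρ y = exp (log (ρ y) - log (ρ x)) * ρ x := by
        rw [exp_sub, exp_log (hpos y), exp_log (hpos x), div_mul_cancel₀ _ (hpos x).ne']
    _ ≤ exp (β * |x - y|) * ρ x :=
        mul_le_mul_of_nonneg_right (exp_le_exp.2 ((le_abs_self _).trans hlip)) (hpos x).le

lemma deriv_hOf {U : ℝ → ℝ} (hU : Differentiable ℝ U) (α : ℝ) {v : ℝ} (hv : 0 < v) :
    deriv (hOf U α) v = -(α⁻¹ * v⁻¹) * deriv U (-(α⁻¹ * log v)) := by
  have hloc : hOf U α =ᶠ[𝓝 v] fun y => U (-(α⁻¹ * log y)) := by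
    filter_upwards [lt_mem_nhds hv] with y hy
    simp only [hOf, if_pos hy]
  have h : HasDerivAt (fun y => U (-(α⁻¹ * log y))) _ v :=
    (hU _).hasDerivAt.comp v ((hasDerivAt_log hv.ne').const_mul α⁻¹).neg
  rw [hloc.deriv_eq, h.deriv, mul_comm]

lemma rhoOf_eq {U : ℝ → ℝ} (hU : Differentiable ℝ U) (hU' : Differentiable ℝ (deriv U))
    (α x : ℝ) : rhoOf U α x =
      -(exp (2 * x) * (α⁻¹ ^ 2 * deriv (deriv U) (α⁻¹ * x) + α⁻¹ * deriv U (α⁻¹ * x))) := by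
  have hv := exp_pos (-x)
  have hloc : deriv (hOf U α) =ᶠ[𝓝 (exp (-x))]
      fun y => -(α⁻¹ * y⁻¹) * deriv U (-(α⁻¹ * log y)) := by
    filter_upwards [lt_mem_nhds hv] with y hy using deriv_hOf hU α hy
  have h : HasDerivAt (fun y => -(α⁻¹ * y⁻¹) * deriv U (-(α⁻¹ * log y))) _ (exp (-x)) :=
    (((hasDerivAt_inv hv.ne').const_mul α⁻¹).neg.mul
    ((hU' _).hasDerivAt.comp _ ((hasDerivAt_log hv.ne').const_mul α⁻¹).neg))
  rw [rhoOf, hloc.deriv_eq, h.deriv, log_exp, show 2 * x = x + x by ring, exp_add]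
  simp only [exp_neg, inv_inv, inv_pow, Pi.neg_apply, mul_neg, neg_neg]
  ring

structure IsWaveSolution (g U : ℝ → ℝ) (α : ℝ) : Prop where
  differentiable : Differentiable ℝ U
  differentiable_deriv : Differentiable ℝ (deriv U)
  ode : ∀ s, deriv (deriv U) s + (α + α⁻¹) * deriv U s + g (U s) = 0

/-- Equal to `-(U″ + α U′)` along a solution, but written without `U″`, so that it is `C¹`. -/
noncomputable def waveD (g U : ℝ → ℝ) (α s : ℝ) : ℝ := g (U s) + α⁻¹ * deriv U s

noncomputable def waveR (g U : ℝ → ℝ) (s : ℝ) : ℝ := -deriv U s * (1 - deriv g (U s))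

lemma antitone_exp_mul_waveR {g U : ℝ → ℝ} {α : ℝ}
    (hA : Antitone fun s => exp (-(α⁻¹ * s)) * -deriv U s) (hU' : ∀ s, deriv U s ≤ 0)
    (hg'U : Monotone fun s => deriv g (U s)) (hg'1 : ∀ s, deriv g (U s) ≤ 1) :
    Antitone fun s => exp (-(α⁻¹ * s)) * waveR g U s := by
  intro t s hts
  have := mul_le_mul (hA hts) (sub_le_sub_left (hg'U hts) 1) (sub_nonneg.2 (hg'1 s))
    (mul_nonneg (exp_pos _).le (neg_nonneg.2 (hU' t)))
  simpa only [waveR, mul_assoc] using this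

namespace IsWaveSolution

variable {g U : ℝ → ℝ} {α : ℝ}

lemma hasDerivAt_waveD (hw : IsWaveSolution g U α) (hα : α ≠ 0) (hg : Differentiable ℝ g)
    (s : ℝ) : HasDerivAt (waveD g U α) (waveR g U s - α⁻¹ * waveD g U α s) s := by
  refine (((hg (U s)).hasDerivAt.comp s (hw.differentiable s).hasDerivAt).add
    ((hw.differentiable_deriv s).hasDerivAt.const_mul α⁻¹)).congr_deriv ?_
  simp only [waveR, waveD]
  linear_combination α⁻¹ * hw.ode s - deriv U s * mul_inv_cancel₀ hα

lemma hasDerivAt_exp_mul_waveD (hw : IsWaveSolution g U α) (hα : α ≠ 0)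
    (hg : Differentiable ℝ g) (s : ℝ) :
    HasDerivAt (fun t => exp (α⁻¹ * t) * waveD g U α t) (exp (α⁻¹ * s) * waveR g U s) s := by
  refine (((hasDerivAt_id s).const_mul α⁻¹).exp.mul (hw.hasDerivAt_waveD hα hg s)).congr_deriv ?_
  simp only [id]
  ring

lemma waveD_pos (hw : IsWaveSolution g U α) (hα : 0 < α) (hg : Differentiable ℝ g)
    (hR : ∀ s, 0 < waveR g U s) (hgU : ∀ s, 0 ≤ g (U s)) (hU : BddAbove (range U)) (s : ℝ) :
    0 < waveD g U α s := by
  have hG : StrictMono fun t => exp (α⁻¹ * t) * waveD g U α t :=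
    strictMono_of_hasDerivAt_pos (hw.hasDerivAt_exp_mul_waveD hα.ne' hg)
      fun t => mul_pos (exp_pos _) (hR t)
  by_contra! hs
  set s₀ := s - 1
  have hs₀ : waveD g U α s₀ < 0 := by
    have := hG (show s₀ < s by simp [s₀])
    nlinarith [exp_pos (α⁻¹ * s₀), exp_pos (α⁻¹ * s)]
  have hderiv : ∀ t ≤ s₀, deriv U t ≤ -(α * -waveD g U α s₀) := fun t ht => by
    have hDt : waveD g U α t ≤ waveD g U α s₀ := by
      refine (le_exp_mul_sub_mul_of_monotone_exp_mul hG.monotone ht).trans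
        (mul_le_of_one_le_left hs₀.le (one_le_exp ?_))
      exact mul_nonneg (inv_pos.2 hα).le (sub_nonneg.2 ht)
    have hU' : deriv U t = α * (waveD g U α t - g (U t)) := by
      simp only [waveD]; field_simp; ring
    nlinarith [hgU t]
  obtain ⟨B, hB⟩ := hU
  obtain ⟨t, ht⟩ := ((tendsto_atBot_atTop_of_deriv_le_neg hw.differentiable
    (by nlinarith) hderiv).eventually_gt_atTop B).exists
  exact (hB (mem_range_self t)).not_gt ht

lemma apply_le_mul_neg_deriv (hw : IsWaveSolution g U α) (hα : 0 < α) (hg : Differentiable ℝ g)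
    (hU' : ∀ s, deriv U s ≤ 0) (hg' : ∀ s, -1 ≤ deriv g (U s))
    (hgU : BddAbove (range fun s => g (U s))) (s : ℝ) :
    g (U s) ≤ (α + 2 * α⁻¹) * -deriv U s := by
  set m := α + 2 * α⁻¹
  have hm : 0 < m := by positivity
  have hΦ : ∀ s, HasDerivAt (fun t => exp (m * t) * (m * -deriv U t - g (U t)))
      (exp (m * s) * (-deriv U s * (1 + 2 * α⁻¹ ^ 2 + deriv g (U s)))) s := fun s => by
    refine (((hasDerivAt_id s).const_mul m).exp.mul
      (((hw.differentiable_deriv s).hasDerivAt.neg.const_mul m).sub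
        ((hg (U s)).hasDerivAt.comp s (hw.differentiable s).hasDerivAt))).congr_deriv ?_
    simp only [id, m, Pi.sub_apply, Pi.neg_apply, Function.comp_apply]
    linear_combination -exp (m * s) * m * hw.ode s
      - exp (m * s) * deriv U s * mul_inv_cancel₀ hα.ne'
  refine sub_nonneg.1 (nonneg_of_monotone_exp_mul_of_bddBelow hm
    (monotone_of_hasDerivAt_nonneg hΦ fun t => ?_) ?_ s)
  · exact mul_nonneg (exp_pos _).le (mul_nonneg (neg_nonneg.2 (hU' t)) (by nlinarith [hg' t]))
  · obtain ⟨M, hM⟩ := hgU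
    refine ⟨-M, forall_mem_range.2 fun t => ?_⟩
    nlinarith [hU' t, hM (mem_range_self t)]

lemma antitone_exp_mul_neg_deriv (hw : IsWaveSolution g U α)
    (hgU : ∀ s, g (U s) ≤ (α + 2 * α⁻¹) * -deriv U s) :
    Antitone fun s => exp (-(α⁻¹ * s)) * -deriv U s := by
  refine antitone_of_hasDerivAt_nonpos
    (f' := fun s => -exp (-(α⁻¹ * s)) * ((α + 2 * α⁻¹) * -deriv U s - g (U s)))
    (fun s => ?_) fun s => ?_
  · refine (((hasDerivAt_id s).const_mul α⁻¹).neg.exp.mul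
      (hw.differentiable_deriv s).hasDerivAt.neg).congr_deriv ?_
    simp only [id, Pi.neg_apply]
    linear_combination -exp (-(α⁻¹ * s)) * hw.ode s
  · exact mul_nonpos_of_nonpos_of_nonneg (neg_nonpos.2 (exp_pos _).le) (sub_nonneg.2 (hgU s))

lemma half_mul_waveR_le_waveD (hw : IsWaveSolution g U α) (hα : 0 < α) (hg : Differentiable ℝ g)
    (hD : ∀ s, 0 < waveD g U α s) (hP : Antitone fun s => exp (-(α⁻¹ * s)) * waveR g U s)
    (s : ℝ) : α / 2 * waveR g U s ≤ waveD g U α s := by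
  set p := exp (-(α⁻¹ * s)) * waveR g U s
  set K := fun t => exp (α⁻¹ * t) * waveD g U α t - α / 2 * exp (2 * (α⁻¹ * t)) * p
  have hK : ∀ t, HasDerivAt K (exp (α⁻¹ * t) * waveR g U t - exp (2 * (α⁻¹ * t)) * p) t := by
    intro t
    have hexp := (((hasDerivAt_id t).const_mul α⁻¹).const_mul 2).exp
    refine ((hw.hasDerivAt_exp_mul_waveD hα.ne' hg t).sub
      ((hexp.const_mul (α / 2)).mul_const p)).congr_deriv ?_
    simp only [id]
    field_simp
  have hKmono : MonotoneOn K (Iic s) := by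
    refine monotoneOn_of_hasDerivWithinAt_nonneg (convex_Iic s)
      (fun t _ => (hK t).continuousAt.continuousWithinAt) (fun t _ => (hK t).hasDerivWithinAt)
      fun t ht => ?_
    have hpt := hP (interior_subset (s := Iic s) ht)
    rw [exp_eq_exp_two_mul_mul_exp_neg (α⁻¹ * t), mul_assoc, ← mul_sub]
    exact mul_nonneg (exp_pos _).le (sub_nonneg.2 hpt)
  have hlim : Tendsto (fun t => -(α / 2 * exp (2 * (α⁻¹ * t)) * p)) atBot (𝓝 0) := by
    have h2t := (tendsto_id.const_mul_atBot (inv_pos.2 hα)).const_mul_atBot two_pos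
    simpa using ((tendsto_exp_atBot.comp h2t).const_mul (α / 2)).mul_const p |>.neg
  have hKs : 0 ≤ K s := by
    refine le_of_tendsto hlim ?_
    filter_upwards [eventually_le_atBot s] with t ht
    have hGt := mul_pos (exp_pos (α⁻¹ * t)) (hD t)
    calc -(α / 2 * exp (2 * (α⁻¹ * t)) * p) ≤ K t := by simp only [K]; linarith
      _ ≤ K s := hKmono ht self_mem_Iic ht
  have hKs' : K s = exp (α⁻¹ * s) * (waveD g U α s - α / 2 * waveR g U s) := by
    simp only [K, p]
    linear_combination α / 2 * waveR g U s * exp_eq_exp_two_mul_mul_exp_neg (α⁻¹ * s)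
  exact sub_nonneg.1 (nonneg_of_mul_nonneg_right (hKs' ▸ hKs) (exp_pos _))

lemma rhoOf_eq_waveD (hw : IsWaveSolution g U α) (hα : α ≠ 0) (x : ℝ) :
    rhoOf U α x = α⁻¹ ^ 2 * (exp (2 * x) * waveD g U α (α⁻¹ * x)) := by
  rw [rhoOf_eq hw.differentiable hw.differentiable_deriv]
  simp only [waveD]
  linear_combination -(α⁻¹ ^ 2 * exp (2 * x)) * hw.ode (α⁻¹ * x)
    + α⁻¹ * exp (2 * x) * deriv U (α⁻¹ * x) * mul_inv_cancel₀ hα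

lemma hasDerivAt_rhoOf (hw : IsWaveSolution g U α) (hα : α ≠ 0) (hg : Differentiable ℝ g)
    (x : ℝ) : HasDerivAt (rhoOf U α) (α⁻¹ ^ 2 * (exp (2 * x) * (2 * waveD g U α (α⁻¹ * x) +
      α⁻¹ * (waveR g U (α⁻¹ * x) - α⁻¹ * waveD g U α (α⁻¹ * x))))) x := by
  rw [funext (hw.rhoOf_eq_waveD hα)]
  refine ((((hasDerivAt_id x).const_mul 2).exp.mul ((hw.hasDerivAt_waveD hα hg _).comp x
    ((hasDerivAt_id x).const_mul α⁻¹))).const_mul _).congr_deriv ?_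
  simp only [id, Function.comp_apply]
  ring

lemma abs_deriv_rhoOf_le (hw : IsWaveSolution g U α) (hα : 0 < α) (hg : Differentiable ℝ g)
    {x : ℝ} (hR : 0 ≤ waveR g U (α⁻¹ * x))
    (hRD : α / 2 * waveR g U (α⁻¹ * x) ≤ waveD g U α (α⁻¹ * x)) :
    |deriv (rhoOf U α) x| ≤ (2 + α⁻¹ ^ 2) * rhoOf U α x := by
  rw [(hw.hasDerivAt_rhoOf hα.ne' hg x).deriv, hw.rhoOf_eq_waveD hα.ne', ← mul_assoc, abs_mul,
    abs_of_pos (by positivity : 0 < α⁻¹ ^ 2 * exp (2 * x))]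
  set D := waveD g U α (α⁻¹ * x)
  set R := waveR g U (α⁻¹ * x)
  have hαR : 0 ≤ α⁻¹ * R := mul_nonneg (inv_pos.2 hα).le hR
  have hαRD : α⁻¹ * R ≤ 2 * α⁻¹ ^ 2 * D := by
    calc α⁻¹ * R = 2 * α⁻¹ ^ 2 * (α / 2 * R) := by field_simp
      _ ≤ 2 * α⁻¹ ^ 2 * D := by gcongr
  have hZ : |2 * D + α⁻¹ * (R - α⁻¹ * D)| ≤ (2 + α⁻¹ ^ 2) * D :=
    abs_le.2 ⟨by nlinarith [sq_nonneg α⁻¹], by nlinarith⟩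
  calc α⁻¹ ^ 2 * exp (2 * x) * |2 * D + α⁻¹ * (R - α⁻¹ * D)|
      ≤ α⁻¹ ^ 2 * exp (2 * x) * ((2 + α⁻¹ ^ 2) * D) := by gcongr
    _ = (2 + α⁻¹ ^ 2) * (α⁻¹ ^ 2 * (exp (2 * x) * D)) := by ring

end IsWaveSolution

theorem stmt8_general (g U : ℝ → ℝ) (α : ℝ) (hα : α ∈ Set.Ioo (0:ℝ) 1)
    (hgC1 : ContDiff ℝ 1 g) (hgnonneg : ∀ u ∈ Set.Icc (0:ℝ) 1, 0 ≤ g u)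
    (hg'0 : deriv g 0 = 1)
    (hg'anti : StrictAntiOn (deriv g) (Set.Icc 0 1)) (hg'1 : -1 ≤ deriv g 1)
    (hUC2 : ContDiff ℝ 2 U) (hUrange : ∀ s, U s ∈ Set.Ioo (0:ℝ) 1)
    (hUode : ∀ s, deriv (deriv U) s + (α + α⁻¹) * deriv U s + g (U s) = 0)
    (hU' : ∀ s, deriv U s < 0) :
    (∀ x : ℝ, 0 < rhoOf U α x) ∧
    (∀ x : ℝ, |deriv (rhoOf U α) x| ≤ (2 + α⁻¹ ^ 2) * rhoOf U α x) ∧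
    (∀ x y : ℝ, rhoOf U α y ≤ Real.exp ((2 + α⁻¹ ^ 2) * |x - y|) * rhoOf U α x) := by
  have hα0 := hα.1
  have hg : Differentiable ℝ g := hgC1.differentiable one_ne_zero
  have hw : IsWaveSolution g U α :=
    ⟨hUC2.differentiable two_ne_zero,
      (contDiff_succ_iff_deriv.1 hUC2).2.2.differentiable one_ne_zero, hUode⟩
  have hUIcc : ∀ s, U s ∈ Icc (0 : ℝ) 1 := fun s => Ioo_subset_Icc_self (hUrange s)
  have hg'lt : ∀ s, deriv g (U s) < 1 := fun s =>
    hg'0 ▸ hg'anti ⟨le_rfl, zero_le_one⟩ (hUIcc s) (hUrange s).1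
  have hg'ge : ∀ s, -1 ≤ deriv g (U s) := fun s =>
    hg'1.trans (hg'anti.antitoneOn (hUIcc s) ⟨zero_le_one, le_rfl⟩ (hUrange s).2.le)
  have hg'U : Monotone fun s => deriv g (U s) := fun t s hts =>
    hg'anti.antitoneOn (hUIcc s) (hUIcc t) ((strictAnti_of_deriv_neg hU').antitone hts)
  have hgU : BddAbove (range fun s => g (U s)) :=
    (isCompact_Icc.bddAbove_image hg.continuous.continuousOn).mono
      (range_subset_iff.2 fun s => mem_image_of_mem g (hUIcc s))
  have hR : ∀ s, 0 < waveR g U s := fun s => mul_pos (neg_pos.2 (hU' s)) (sub_pos.2 (hg'lt s))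
  have hD := hw.waveD_pos hα0 hg hR (fun s => hgnonneg _ (hUIcc s))
    ⟨1, forall_mem_range.2 fun s => (hUrange s).2.le⟩
  have hP := antitone_exp_mul_waveR (hw.antitone_exp_mul_neg_deriv
    (hw.apply_le_mul_neg_deriv hα0 hg (fun s => (hU' s).le) hg'ge hgU))
    (fun s => (hU' s).le) hg'U (fun s => (hg'lt s).le)
  have hρ : ∀ x, 0 < rhoOf U α x := fun x => by
    have := hD (α⁻¹ * x)
    rw [hw.rhoOf_eq_waveD hα0.ne']
    positivity
  have hρ' : ∀ x, |deriv (rhoOf U α) x| ≤ (2 + α⁻¹ ^ 2) * rhoOf U α x := fun x =>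
    hw.abs_deriv_rhoOf_le hα0 hg (hR _).le (hw.half_mul_waveR_le_waveD hα0 hg hD hP _)
  exact ⟨hρ, hρ', le_exp_mul_abs_sub_mul_of_abs_deriv_le_s8 hρ
    (fun x => (hw.hasDerivAt_rhoOf hα0.ne' hg x).differentiableAt) hρ'⟩

/-- `ρ > 0` on `ℝ` and `|ρ′| ≤ β ρ` with `β = 2 + α⁻²`; in particular
`ρ(y) ≤ e^{β|x−y|} ρ(x)` for all `x, y`. -/
theorem stmt8 (g U : ℝ → ℝ) (α : ℝ) (hα : α ∈ Set.Ioo (0:ℝ) 1)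
    (hgC1 : ContDiff ℝ 1 g) (hgnonneg : ∀ u ∈ Set.Icc (0:ℝ) 1, 0 ≤ g u)
    (hg0 : g 0 = 0) (hg1 : g 1 = 0) (hg'0 : deriv g 0 = 1)
    (hg'anti : StrictAntiOn (deriv g) (Set.Icc 0 1)) (hg'1 : -1 ≤ deriv g 1)
    (hgint : MeasureTheory.IntegrableOn (fun u => (u - g u) / u ^ 2) (Set.Ioc 0 1))
    (hUC2 : ContDiff ℝ 2 U) (hUrange : ∀ s, U s ∈ Set.Ioo (0:ℝ) 1)
    (hUode : ∀ s, deriv (deriv U) s + (α + α⁻¹) * deriv U s + g (U s) = 0)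
    (hU' : ∀ s, deriv U s < 0)
    (hUbot : Tendsto U atBot (nhds 1)) (hUtop : Tendsto U atTop (nhds 0))
    (hUexp : Tendsto (fun s => Real.exp (α * s) * U s) atTop (nhds 1)) :
    (∀ x : ℝ, 0 < rhoOf U α x) ∧
    (∀ x : ℝ, |deriv (rhoOf U α) x| ≤ (2 + α⁻¹ ^ 2) * rhoOf U α x) ∧
    (∀ x y : ℝ, rhoOf U α y ≤ Real.exp ((2 + α⁻¹ ^ 2) * |x - y|) * rhoOf U α x) :=
  stmt8_general g U α hα hgC1 hgnonneg hg'0 hg'anti hg'1 hUC2 hUrange hUode hU'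
end

section
/- Let J satisfy (J) and let f ∈ C²(ℝ × [0,1]) with f(x,0) = f(x,1) = 0. Let u : ℝ × [t₀,∞) → [0,1] be a bounded continuous solution of u_t = Hu + f(x,u), and suppose η(t₀) := sup_{0<|y−x|≤δ} |u(y,t₀) − u(x,t₀)| / (|y−x| u(x,t₀)) < ∞. Then for every t ≥ t₀ and every s with 0 < |s| ≤ δ, sup_{x∈ℝ} |u(x+s,t) − u(x,t)| / |s| ≤ [1 + η(t₀)] e^{‖f‖_{C¹}(t−t₀)} − 1. -/
/-!
For fixed `s`, the increment `w(x, τ) = u(x + s, τ) - u(x, τ)` satisfies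
`w_τ + w = J * w + (f(x + s, u(x + s, τ)) - f(x, u(x, τ)))`, whose right side is bounded
by `(1 + M) φ(τ) + M |s|` with `φ(τ) = sup_x |w(x, τ)|`. Integrating with the factor `e^τ`
bounds the right Dini derivative of `φ` by `M φ + M |s|`; `φ` is continuous because `u` is
Lipschitz in time uniformly in `x`. Grönwall's inequality started from `φ(t₀) ≤ η(t₀) |s|`
then gives `φ(t) ≤ (η(t₀) + 1) |s| e^{M (t - t₀)} - |s|`.
-/

open MeasureTheory Filter Real Set
open scoped Topology

theorem abs_integral_mul_le {α : Type*} [MeasurableSpace α] {μ : Measure α} {J v : α → ℝ}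
    {M : ℝ} (hJ0 : ∀ y, 0 ≤ J y) (hJ1 : ∫ y, J y ∂μ = 1) (hv : ∀ y, |v y| ≤ M) :
    |∫ y, J y * v y ∂μ| ≤ M := by
  have hJ : Integrable J μ := Integrable.of_integral_ne_zero (by simp [hJ1])
  calc |∫ y, J y * v y ∂μ| ≤ ∫ y, J y * M ∂μ :=
        norm_integral_le_of_norm_le (f := fun y => J y * v y) (hJ.mul_const M)
          (.of_forall fun y => by
            rw [Real.norm_eq_abs, abs_mul, abs_of_nonneg (hJ0 y)]
            exact mul_le_mul_of_nonneg_left (hv y) (hJ0 y))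
    _ = M := by rw [integral_mul_const, hJ1, one_mul]

theorem exp_mul_abs_le_of_abs_deriv_add_le {w w' : ℝ → ℝ} {a b M : ℝ} (hab : a ≤ b)
    (hw : ContinuousOn w (Icc a b)) (hw' : ∀ τ ∈ Ioo a b, HasDerivAt w (w' τ) τ)
    (hbound : ∀ τ ∈ Ioo a b, |w' τ + w τ| ≤ M) :
    |exp b * w b - exp a * w a| ≤ M * (exp b - exp a) := by
  rcases hab.eq_or_lt with rfl | hlt
  · simp
  obtain ⟨c, hc, hmvt⟩ := exists_ratio_hasDerivAt_eq_ratio_slope (fun τ => exp τ * w τ)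
    (fun τ => exp τ * (w' τ + w τ)) hlt (continuous_exp.continuousOn.mul hw)
    (fun τ hτ => ((hasDerivAt_exp τ).mul (hw' τ hτ)).congr_deriv (by ring))
    exp exp continuous_exp.continuousOn (fun τ _ => hasDerivAt_exp τ)
  have hexp : 0 ≤ exp b - exp a := sub_nonneg.2 (exp_le_exp.2 hab)
  have key : |exp b * w b - exp a * w a| * exp c ≤ M * (exp b - exp a) * exp c := by
    rw [← abs_of_pos (exp_pos c), ← abs_mul, ← hmvt, abs_mul, abs_mul, abs_of_nonneg hexp,
      abs_of_pos (exp_pos c)]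
    have := mul_le_mul_of_nonneg_left (hbound c hc) (mul_nonneg hexp (exp_pos c).le)
    linarith
  exact le_of_mul_le_mul_right key (exp_pos c)

theorem tendsto_inv_sub_mul_exp_sub_one (p : ℝ) :
    Tendsto (fun z => (z - p)⁻¹ * (exp (p - z) - 1)) (𝓝[>] p) (𝓝 (-1)) := by
  have hderiv : HasDerivAt (fun z => exp (p - z)) (-1) p := by
    simpa using ((hasDerivAt_id p).const_sub p).exp
  refine ((hasDerivAt_iff_tendsto_slope.1 hderiv).mono_left
    (nhdsWithin_mono p fun z hz => ne_of_gt hz)).congr fun z => ?_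
  simp [slope_def_field, div_eq_inv_mul]

theorem frequently_slope_lt_of_le_exp_step {φ g : ℝ → ℝ} {p r : ℝ}
    (hg : ContinuousWithinAt g (Ioi p) p)
    (hle : ∀ᶠ z in 𝓝[>] p, φ z ≤ exp (p - z) * φ p + (1 - exp (p - z)) * g z)
    (hr : g p - φ p < r) :
    ∃ᶠ z in 𝓝[>] p, (z - p)⁻¹ * (φ z - φ p) < r := by
  have hlim : Tendsto (fun z => (z - p)⁻¹ * (exp (p - z) - 1) * (φ p - g z)) (𝓝[>] p)
      (𝓝 (g p - φ p)) := by
    simpa using (tendsto_inv_sub_mul_exp_sub_one p).mul (tendsto_const_nhds.sub hg.tendsto)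
  refine Eventually.frequently ?_
  filter_upwards [hle, hlim.eventually_lt_const hr, self_mem_nhdsWithin] with z hz hzr hpz
  have hinv : 0 ≤ (z - p)⁻¹ := inv_nonneg.2 (sub_nonneg.2 (le_of_lt hpz))
  calc (z - p)⁻¹ * (φ z - φ p)
      ≤ (z - p)⁻¹ * ((exp (p - z) - 1) * (φ p - g z)) :=
        mul_le_mul_of_nonneg_left (by linarith) hinv
    _ < r := by rwa [← mul_assoc]

theorem gronwallBound_mul_eq (δ K c x : ℝ) :
    gronwallBound δ K (K * c) x = (δ + c) * exp (K * x) - c := by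
  rcases eq_or_ne K 0 with rfl | hK
  · simp [gronwallBound_K0]
  · rw [gronwallBound_of_K_ne_0 hK]
    field_simp
    ring

theorem abs_ciSup_sub_ciSup_le {ι : Sort*} [Nonempty ι] {F G : ι → ℝ} {c : ℝ}
    (hF : BddAbove (range F)) (hG : BddAbove (range G)) (h : ∀ i, |F i - G i| ≤ c) :
    |(⨆ i, F i) - ⨆ i, G i| ≤ c := by
  refine abs_sub_le_iff.2 ⟨sub_le_iff_le_add.2 (ciSup_le fun i => ?_),
    sub_le_iff_le_add.2 (ciSup_le fun i => ?_)⟩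
  · linarith [(abs_sub_le_iff.1 (h i)).1, le_ciSup hG i]
  · linarith [(abs_sub_le_iff.1 (h i)).2, le_ciSup hF i]

theorem le_gronwallBound_of_exp_step {φ : ℝ → ℝ} {a b δ K ε C : ℝ}
    (hφ : ContinuousOn φ (Icc a b)) (ha : φ a ≤ δ)
    (hstep : ∀ p ∈ Ico a b, ∀ z, p ≤ z →
      φ z ≤ exp (p - z) * φ p + (1 - exp (p - z)) * ((1 + K) * (φ p + C * (z - p)) + ε)) :
    ∀ t ∈ Icc a b, φ t ≤ gronwallBound δ K ε (t - a) :=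
  le_gronwallBound_of_liminf_deriv_right_le (f' := fun p => K * φ p + ε) hφ
    (fun p hp r hr => frequently_slope_lt_of_le_exp_step
      (g := fun z => (1 + K) * (φ p + C * (z - p)) + ε) (by fun_prop)
      (eventually_nhdsWithin_of_forall fun z hz => hstep p hp z (le_of_lt hz))
      (by linarith))
    ha fun _ _ => le_rfl

def LipschitzOnStrip (f : ℝ → ℝ → ℝ) (M : ℝ) : Prop :=
  ∀ x₁ x₂ v₁ v₂ : ℝ, v₁ ∈ Icc (0:ℝ) 1 → v₂ ∈ Icc (0:ℝ) 1 →
    |f x₁ v₁ - f x₂ v₂| ≤ M * (|x₁ - x₂| + |v₁ - v₂|)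

noncomputable def incrementSup (u : ℝ → ℝ → ℝ) (s τ : ℝ) : ℝ := ⨆ x, |u (x + s) τ - u x τ|

structure IsNonlocalSolution (J : ℝ → ℝ) (f : ℝ → ℝ → ℝ) (u : ℝ → ℝ → ℝ) (t₀ : ℝ) : Prop where
  continuousOn : ContinuousOn (fun p : ℝ × ℝ => u p.1 p.2) (univ ×ˢ Ici t₀)
  mem_Icc : ∀ x t, t₀ ≤ t → u x t ∈ Icc (0 : ℝ) 1
  hasDerivAt : ∀ x t, t₀ < t →
    HasDerivAt (fun τ => u x τ) ((∫ y, J y * u (x - y) t) - u x t + f x (u x t)) t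

namespace IsNonlocalSolution

variable {J : ℝ → ℝ} {f : ℝ → ℝ → ℝ} {u : ℝ → ℝ → ℝ} {t₀ Mf : ℝ}

theorem continuous_space (hu : IsNonlocalSolution J f u t₀) {τ : ℝ} (hτ : t₀ ≤ τ) :
    Continuous fun x => u x τ :=
  continuousOn_univ.1 <|
    hu.continuousOn.comp (continuous_id.prodMk continuous_const).continuousOn
      fun x _ => ⟨mem_univ x, hτ⟩

theorem continuousOn_time (hu : IsNonlocalSolution J f u t₀) (x : ℝ) :
    ContinuousOn (fun τ => u x τ) (Ici t₀) :=
  hu.continuousOn.comp (continuous_const.prodMk continuous_id).continuousOn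
    fun _ hτ => ⟨mem_univ x, hτ⟩

theorem abs_le_one (hu : IsNonlocalSolution J f u t₀) {x τ : ℝ} (hτ : t₀ ≤ τ) :
    |u x τ| ≤ 1 :=
  abs_le.2 ⟨by linarith [(hu.mem_Icc x τ hτ).1], (hu.mem_Icc x τ hτ).2⟩

theorem abs_sub_le_one (hu : IsNonlocalSolution J f u t₀) {x y τ : ℝ} (hτ : t₀ ≤ τ) :
    |u y τ - u x τ| ≤ 1 := by
  have hx := hu.mem_Icc x τ hτ
  have hy := hu.mem_Icc y τ hτ
  exact abs_sub_le_iff.2 ⟨by linarith [hx.1, hy.2], by linarith [hx.2, hy.1]⟩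

theorem abs_sub_le_incrementSup (hu : IsNonlocalSolution J f u t₀) {τ : ℝ} (hτ : t₀ ≤ τ)
    (s x : ℝ) : |u (x + s) τ - u x τ| ≤ incrementSup u s τ :=
  le_ciSup (f := fun x => |u (x + s) τ - u x τ|)
    ⟨1, forall_mem_range.2 fun _ => hu.abs_sub_le_one hτ⟩ x

theorem integrable_mul_comp_sub (hu : IsNonlocalSolution J f u t₀) (hJ : Integrable J)
    {τ : ℝ} (hτ : t₀ ≤ τ) (x : ℝ) : Integrable fun y => J y * u (x - y) τ :=
  hJ.mul_bdd ((hu.continuous_space hτ).comp (by fun_prop)).aestronglyMeasurable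
    (.of_forall fun _ => hu.abs_le_one hτ)

theorem abs_sub_time_le (hu : IsNonlocalSolution J f u t₀) (hJ0 : ∀ y, 0 ≤ J y)
    (hJ1 : ∫ y, J y = 1) (hMf : 0 ≤ Mf) (hf0 : ∀ x, f x 0 = 0)
    (hfLip : LipschitzOnStrip f Mf)
    {x p q : ℝ} (hp : t₀ ≤ p) (hq : t₀ ≤ q) : |u x q - u x p| ≤ (2 + Mf) * |q - p| := by
  wlog hpq : p ≤ q generalizing p q
  · rw [abs_sub_comm, abs_sub_comm q]; exact this hq hp (le_of_not_ge hpq)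
  rcases hpq.eq_or_lt with rfl | hlt
  · simp
  rw [abs_of_pos (sub_pos.2 hlt)]
  obtain ⟨c, hc, hslope⟩ := exists_hasDerivAt_eq_slope (fun τ => u x τ) _ hlt
    ((hu.continuousOn_time x).mono fun τ hτ => hp.trans hτ.1)
    fun τ hτ => hu.hasDerivAt x τ (hp.trans_lt hτ.1)
  have hc₀ : t₀ ≤ c := hp.trans hc.1.le
  have hconv := abs_integral_mul_le (v := fun y => u (x - y) c) hJ0 hJ1
    fun _ => hu.abs_le_one hc₀
  have hf : |f x (u x c)| ≤ Mf := by
    have h := hfLip x x (u x c) 0 (hu.mem_Icc x c hc₀) ⟨le_rfl, zero_le_one⟩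
    rw [hf0, sub_zero, sub_self, abs_zero, zero_add, sub_zero] at h
    nlinarith [hu.abs_le_one (x := x) hc₀]
  have hderiv : |(∫ y, J y * u (x - y) c) - u x c + f x (u x c)| ≤ 2 + Mf := by
    linarith [abs_add_le ((∫ y, J y * u (x - y) c) - u x c) (f x (u x c)),
      abs_sub ((∫ y, J y * u (x - y) c)) (u x c), hu.abs_le_one (x := x) hc₀]
  rwa [hslope, abs_div, abs_of_pos (sub_pos.2 hlt), div_le_iff₀ (sub_pos.2 hlt)] at hderiv

theorem abs_incrementSup_sub_le (hu : IsNonlocalSolution J f u t₀) (hJ0 : ∀ y, 0 ≤ J y)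
    (hJ1 : ∫ y, J y = 1) (hMf : 0 ≤ Mf) (hf0 : ∀ x, f x 0 = 0)
    (hfLip : LipschitzOnStrip f Mf)
    (s : ℝ) {p q : ℝ} (hp : t₀ ≤ p) (hq : t₀ ≤ q) :
    |incrementSup u s q - incrementSup u s p| ≤ 2 * (2 + Mf) * |q - p| := by
  refine abs_ciSup_sub_ciSup_le ⟨1, forall_mem_range.2 fun _ => hu.abs_sub_le_one hq⟩
    ⟨1, forall_mem_range.2 fun _ => hu.abs_sub_le_one hp⟩ fun x => ?_
  calc _ ≤ |(u (x + s) q - u (x + s) p) - (u x q - u x p)| := by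
        rw [show (u (x + s) q - u (x + s) p) - (u x q - u x p)
          = (u (x + s) q - u x q) - (u (x + s) p - u x p) by ring]
        exact abs_abs_sub_abs_le_abs_sub _ _
    _ ≤ |u (x + s) q - u (x + s) p| + |u x q - u x p| := abs_sub _ _
    _ ≤ 2 * (2 + Mf) * |q - p| := by
      linarith [hu.abs_sub_time_le hJ0 hJ1 hMf hf0 hfLip (x := x + s) hp hq,
        hu.abs_sub_time_le hJ0 hJ1 hMf hf0 hfLip (x := x) hp hq]

theorem continuousOn_incrementSup (hu : IsNonlocalSolution J f u t₀) (hJ0 : ∀ y, 0 ≤ J y)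
    (hJ1 : ∫ y, J y = 1) (hMf : 0 ≤ Mf) (hf0 : ∀ x, f x 0 = 0)
    (hfLip : LipschitzOnStrip f Mf) (s : ℝ) :
    ContinuousOn (incrementSup u s) (Ici t₀) :=
  (LipschitzOnWith.of_dist_le' (K := 2 * (2 + Mf)) fun q hq p hp => by
    simpa only [Real.dist_eq] using
      hu.abs_incrementSup_sub_le hJ0 hJ1 hMf hf0 hfLip s hp hq).continuousOn

theorem abs_integral_sub_le_incrementSup (hu : IsNonlocalSolution J f u t₀)
    (hJ0 : ∀ y, 0 ≤ J y) (hJ1 : ∫ y, J y = 1) {τ : ℝ} (hτ : t₀ ≤ τ) (s x : ℝ) :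
    |(∫ y, J y * u (x + s - y) τ) - ∫ y, J y * u (x - y) τ| ≤ incrementSup u s τ := by
  have hJ : Integrable J := .of_integral_ne_zero (by simp [hJ1])
  rw [← integral_sub (hu.integrable_mul_comp_sub hJ hτ _) (hu.integrable_mul_comp_sub hJ hτ _)]
  simp_rw [← mul_sub]
  refine abs_integral_mul_le hJ0 hJ1 fun y => ?_
  rw [show x + s - y = x - y + s by ring]
  exact hu.abs_sub_le_incrementSup hτ s (x - y)

theorem incrementSup_le_exp_step (hu : IsNonlocalSolution J f u t₀) (hJ0 : ∀ y, 0 ≤ J y)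
    (hJ1 : ∫ y, J y = 1) (hMf : 0 ≤ Mf) (hf0 : ∀ x, f x 0 = 0)
    (hfLip : LipschitzOnStrip f Mf)
    (s : ℝ) {p z : ℝ} (hp : t₀ ≤ p) (hpz : p ≤ z) :
    incrementSup u s z ≤ exp (p - z) * incrementSup u s p + (1 - exp (p - z)) *
      ((1 + Mf) * (incrementSup u s p + 2 * (2 + Mf) * (z - p)) + Mf * |s|) := by
  set φ := incrementSup u s
  set M := (1 + Mf) * (φ p + 2 * (2 + Mf) * (z - p)) + Mf * |s|
  refine ciSup_le fun x => ?_
  have hstep := exp_mul_abs_le_of_abs_deriv_add_le (w := fun τ => u (x + s) τ - u x τ) (M := M)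
    hpz (((hu.continuousOn_time _).sub (hu.continuousOn_time x)).mono fun τ hτ => hp.trans hτ.1)
    (fun τ hτ => (hu.hasDerivAt _ τ (hp.trans_lt hτ.1)).sub
      (hu.hasDerivAt x τ (hp.trans_lt hτ.1)))
    fun τ hτ => ?_
  · have hexp : exp z * exp (p - z) = exp p := by rw [← exp_add]; ring_nf
    refine le_of_mul_le_mul_left ?_ (exp_pos z)
    calc exp z * |u (x + s) z - u x z|
        ≤ exp p * |u (x + s) p - u x p| + M * (exp z - exp p) := by
          have := abs_sub_abs_le_abs_sub (exp z * (u (x + s) z - u x z))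
            (exp p * (u (x + s) p - u x p))
          rw [abs_mul, abs_mul, abs_of_pos (exp_pos z), abs_of_pos (exp_pos p)] at this
          linarith
      _ ≤ exp p * φ p + M * (exp z - exp p) := by
          gcongr; exact hu.abs_sub_le_incrementSup hp s x
      _ = exp z * (exp (p - z) * φ p + (1 - exp (p - z)) * M) := by
          linear_combination (M - φ p) * hexp
  · have hτ₀ : t₀ ≤ τ := hp.trans hτ.1.le
    have hconv := hu.abs_integral_sub_le_incrementSup hJ0 hJ1 hτ₀ s x
    have hf := hfLip (x + s) x (u (x + s) τ) (u x τ) (hu.mem_Icc _ τ hτ₀)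
      (hu.mem_Icc x τ hτ₀)
    rw [add_sub_cancel_left] at hf
    have hφτ : φ τ ≤ φ p + 2 * (2 + Mf) * (z - p) := by
      have h := hu.abs_incrementSup_sub_le hJ0 hJ1 hMf hf0 hfLip s hp hτ₀
      rw [abs_of_nonneg (sub_nonneg.2 hτ.1.le)] at h
      nlinarith [(abs_sub_le_iff.1 h).1, hτ.2]
    have hw := hu.abs_sub_le_incrementSup hτ₀ s x
    calc _ = |((∫ y, J y * u (x + s - y) τ) - ∫ y, J y * u (x - y) τ) +
          (f (x + s) (u (x + s) τ) - f x (u x τ))| := by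
          congr 1; ring
      _ ≤ φ τ + Mf * (|s| + φ τ) := by
          have := mul_le_mul_of_nonneg_left hw hMf
          linarith [abs_add_le ((∫ y, J y * u (x + s - y) τ) - ∫ y, J y * u (x - y) τ)
            (f (x + s) (u (x + s) τ) - f x (u x τ))]
      _ ≤ M := by
          have := mul_le_mul_of_nonneg_left hφτ (by linarith : (0:ℝ) ≤ 1 + Mf)
          linarith

end IsNonlocalSolution

theorem incrementSup_le_mul_abs {u : ℝ → ℝ → ℝ} {s τ η : ℝ} (hη : 0 ≤ η)
    (hu : ∀ x, u x τ ∈ Icc (0 : ℝ) 1)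
    (h : ∀ x, |u (x + s) τ - u x τ| ≤ η * (|s| * u x τ)) :
    incrementSup u s τ ≤ η * |s| :=
  ciSup_le fun x => (h x).trans <| by
    have := mul_le_mul_of_nonneg_left (hu x).2 (mul_nonneg hη (abs_nonneg s))
    linarith

theorem stmt11_general (J : ℝ → ℝ) (f : ℝ → ℝ → ℝ) (u : ℝ → ℝ → ℝ) (δ t₀ Mf η₀ : ℝ)
    (hJnonneg : ∀ x, 0 ≤ J x)
    (hJint : (∫ y, J y) = 1)
    (hf0 : ∀ x, f x 0 = 0)
    (hMf : 0 ≤ Mf)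
    (hMfLip : ∀ x₁ x₂ v₁ v₂ : ℝ, v₁ ∈ Set.Icc (0:ℝ) 1 → v₂ ∈ Set.Icc (0:ℝ) 1 →
      |f x₁ v₁ - f x₂ v₂| ≤ Mf * (|x₁ - x₂| + |v₁ - v₂|))
    (huC : ContinuousOn (fun p : ℝ × ℝ => u p.1 p.2) (Set.univ ×ˢ Set.Ici t₀))
    (hurange : ∀ x t : ℝ, t₀ ≤ t → u x t ∈ Set.Icc (0:ℝ) 1)
    (hueq : ∀ x t : ℝ, t₀ < t → HasDerivAt (fun τ => u x τ)
      ((∫ y, J y * u (x - y) t) - u x t + f x (u x t)) t)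
    (hη₀ : 0 ≤ η₀)
    (hinit : ∀ x y : ℝ, 0 < |y - x| → |y - x| ≤ δ →
      |u y t₀ - u x t₀| ≤ η₀ * (|y - x| * u x t₀)) :
    ∀ t, t₀ ≤ t → ∀ s : ℝ, 0 < |s| → |s| ≤ δ → ∀ x : ℝ,
      |u (x + s) t - u x t| ≤ ((1 + η₀) * Real.exp (Mf * (t - t₀)) - 1) * |s| := by
  intro t ht s hs0 hsδ x
  have hu : IsNonlocalSolution J f u t₀ := ⟨huC, hurange, hueq⟩
  have hstart : incrementSup u s t₀ ≤ η₀ * |s| :=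
    incrementSup_le_mul_abs hη₀ (fun x => hurange x t₀ le_rfl) fun x => by
      simpa using hinit x (x + s) (by simpa using hs0) (by simpa using hsδ)
  have hgronwall := le_gronwallBound_of_exp_step
    ((hu.continuousOn_incrementSup hJnonneg hJint hMf hf0 hMfLip s).mono Icc_subset_Ici_self)
    hstart (fun p hp z hpz =>
      hu.incrementSup_le_exp_step hJnonneg hJint hMf hf0 hMfLip s hp.1 hpz)
    t ⟨ht, le_rfl⟩
  calc |u (x + s) t - u x t| ≤ incrementSup u s t := hu.abs_sub_le_incrementSup ht s x
    _ ≤ gronwallBound (η₀ * |s|) Mf (Mf * |s|) (t - t₀) := hgronwall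
    _ = ((1 + η₀) * exp (Mf * (t - t₀)) - 1) * |s| := by rw [gronwallBound_mul_eq]; ring

/-- Remark after Lemma 4.1: if `η(t₀) < ∞`, then for `t ≥ t₀` and
`0 < |s| ≤ δ`, `sup_x |u(x+s,t) − u(x,t)|/|s| ≤ [1 + η(t₀)] e^{‖f‖_{C¹}(t−t₀)} − 1`,
where `Mf` is a `C¹`-norm (Lipschitz) bound for `f` on `ℝ × [0,1]`. -/
theorem stmt11 (J : ℝ → ℝ) (f : ℝ → ℝ → ℝ) (u : ℝ → ℝ → ℝ) (δ t₀ Mf η₀ : ℝ)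
    (hδ : 0 < δ)
    (hJC1 : ContDiff ℝ 1 J) (hJnonneg : ∀ x, 0 ≤ J x)
    (hJeven : ∀ x, J (-x) = J x) (hJanti : AntitoneOn J (Set.Ici 0))
    (hJsupp : tsupport J = Set.Icc (-δ) δ) (hJint : (∫ y, J y) = 1)
    (hfC2 : ContDiff ℝ 2 (fun p : ℝ × ℝ => f p.1 p.2))
    (hf0 : ∀ x, f x 0 = 0) (hf1 : ∀ x, f x 1 = 0)
    (hMf : 0 ≤ Mf)
    (hMfLip : ∀ x₁ x₂ v₁ v₂ : ℝ, v₁ ∈ Set.Icc (0:ℝ) 1 → v₂ ∈ Set.Icc (0:ℝ) 1 →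
      |f x₁ v₁ - f x₂ v₂| ≤ Mf * (|x₁ - x₂| + |v₁ - v₂|))
    (huC : ContinuousOn (fun p : ℝ × ℝ => u p.1 p.2) (Set.univ ×ˢ Set.Ici t₀))
    (hurange : ∀ x t : ℝ, t₀ ≤ t → u x t ∈ Set.Icc (0:ℝ) 1)
    (hueq : ∀ x t : ℝ, t₀ < t → HasDerivAt (fun τ => u x τ)
      ((∫ y, J y * u (x - y) t) - u x t + f x (u x t)) t)
    (hη₀ : 0 ≤ η₀)
    (hinit : ∀ x y : ℝ, 0 < |y - x| → |y - x| ≤ δ →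
      |u y t₀ - u x t₀| ≤ η₀ * (|y - x| * u x t₀)) :
    ∀ t, t₀ ≤ t → ∀ s : ℝ, 0 < |s| → |s| ≤ δ → ∀ x : ℝ,
      |u (x + s) t - u x t| ≤ ((1 + η₀) * Real.exp (Mf * (t - t₀)) - 1) * |s| :=
  stmt11_general J f u δ t₀ Mf η₀ hJnonneg hJint hf0 hMf hMfLip huC hurange hueq hη₀ hinit
end

section
/- Let g satisfy (G), let α ∈ (0,1), c_α := α + α^{−1}, and let U : ℝ → (0,1) be a C² solution of U″ + c_α U′ + g(U) = 0 with U′ < 0, lim_{s→−∞} U(s) = 1 and lim_{s→∞} U(s) = 0. Define r_α : (−∞,1] → ℝ by r_α(v) = α/(1 + α²(1−v)) for v ∈ [0,1] and r_α(v) = α/(1+α²) for v < 0. Then −U′(x) ≤ r_α(g′(U(x))) · g(U(x)) for every x ∈ ℝ. -/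
open Filter Set

/-! Along the wave, `θ = -U' / g(U)` solves the Riccati equation
`θ' = g'(U) θ² - (α + α⁻¹) θ + 1`. Near `-∞` the coefficient `g'(U)` tends to `g'(1) < 0`,
so `θ` must drop below `(α + α⁻¹)⁻¹ ≤ r_α` somewhere left of any `x₀`: otherwise `1 / θ`
would reach `0` in finite time going left. Since `g'(U)` increases along the wave,
`r_α(g'(U(x))) ≤ r_α(g'(U(x₀)))` for `x ≤ x₀`, and the right-hand side of the Riccati equation
is negative whenever `θ` lies strictly between `r_α(g'(U(x₀)))` and `1 / α`; hence `θ` cannot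
cross `r_α(g'(U(x₀)))` before `x₀`. -/

theorem deriv_right_neg_of_strictAntiOn_deriv {f : ℝ → ℝ} {a b : ℝ} (hab : a < b)
    (hf : ContinuousOn f (Icc a b)) (hfab : f a = f b) (hf' : StrictAntiOn (deriv f) (Icc a b)) :
    deriv f b < 0 := by
  obtain ⟨c, hc, hc0⟩ := exists_deriv_eq_zero hab hf hfab
  exact hc0 ▸ hf' (Ioo_subset_Icc_self hc) (right_mem_Icc.mpr hab.le) hc.2

theorem pos_of_strictAntiOn_deriv {f : ℝ → ℝ} {a b : ℝ} (hf : ContinuousOn f (Icc a b))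
    (ha : f a = 0) (hb : f b = 0) (hf' : StrictAntiOn (deriv f) (Icc a b)) :
    ∀ x ∈ Ioo a b, 0 < f x := by
  intro x hx
  have hconc := (hf'.mono interior_subset).strictConcaveOn_of_deriv (convex_Icc a b) hf
  have hab : a < b := hx.1.trans hx.2
  simpa [ha, hb] using hconc.lt_on_openSegment (left_mem_Icc.mpr hab.le)
    (right_mem_Icc.mpr hab.le) hab.ne (Ioo_subset_openSegment hx)

theorem hasDerivAt_neg_deriv_div_comp {g U : ℝ → ℝ} {c x : ℝ}
    (hg : DifferentiableAt ℝ g (U x)) (hU : DifferentiableAt ℝ U x)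
    (hU' : DifferentiableAt ℝ (deriv U) x) (hgU : g (U x) ≠ 0)
    (hode : deriv (deriv U) x + c * deriv U x + g (U x) = 0) :
    HasDerivAt (fun y => -deriv U y / g (U y))
      (deriv g (U x) * (-deriv U x / g (U x)) ^ 2 - c * (-deriv U x / g (U x)) + 1) x := by
  refine (hU'.hasDerivAt.neg.div (hg.hasDerivAt.comp x hU.hasDerivAt) hgU).congr_deriv ?_
  rw [show deriv (deriv U) x = -(c * deriv U x) - g (U x) by linarith]
  simp only [Function.comp_apply, Pi.neg_apply]
  field_simp
  ring

theorem image_le_of_deriv_neg_of_mem_Ioo {f f' : ℝ → ℝ} {a b K M : ℝ}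
    (hf : ContinuousOn f (Icc a b)) (hf' : ∀ x ∈ Ico a b, HasDerivWithinAt f (f' x) (Ici x) x)
    (ha : f a ≤ K) (hKM : K < M) (hneg : ∀ x ∈ Ico a b, K < f x → f x < M → f' x < 0) :
    ∀ ⦃x⦄, x ∈ Icc a b → f x ≤ K := by
  intro x hx
  -- `hneg` says nothing at the level `K` itself, so fence at every level `d ∈ (K, M)` instead.
  refine le_of_forall_gt_imp_ge_of_dense fun c hc => ?_
  obtain ⟨d, hKd, hd⟩ := exists_between (lt_min hc hKM)
  have hfd : f x ≤ d :=
    image_le_of_deriv_right_lt_deriv_boundary hf hf' (ha.trans hKd.le)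
      (fun _ => hasDerivAt_const _ d)
      (fun y hy hyd => hneg y hy (hyd ▸ hKd) (hyd ▸ hd.trans_le (min_le_right _ _))) hx
  exact hfd.trans (hd.le.trans (min_le_left _ _))

theorem exists_nonpos_of_hasDerivAt_le_neg_mul_sq {θ θ' : ℝ → ℝ} {X η : ℝ} (hη : 0 < η)
    (hθ : ∀ x ≤ X, HasDerivAt θ (θ' x) x) (hθ' : ∀ x ≤ X, θ' x ≤ -η * θ x ^ 2) :
    ∃ x ≤ X, θ x ≤ 0 := by
  by_contra! hpos
  -- `1 / θ` grows at rate at least `η`, so going left it reaches `0` in finite time.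
  have hψ : ∀ x ≤ X, HasDerivAt (fun y => (θ y)⁻¹) (-θ' x / θ x ^ 2) x :=
    fun x hx => (hθ x hx).inv (hpos x hx).ne'
  have hψ' : ∀ x ∈ interior (Iic X), η ≤ deriv (fun y => (θ y)⁻¹) x := by
    intro x hx
    rw [interior_Iic] at hx
    rw [(hψ x hx.le).deriv, le_div_iff₀ (pow_pos (hpos x hx.le) 2)]
    linarith [hθ' x hx.le]
  set y := X - (θ X)⁻¹ / η - 1
  have hyX : y ≤ X := by
    have : 0 ≤ (θ X)⁻¹ / η := div_nonneg (inv_nonneg.mpr (hpos X le_rfl).le) hη.le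
    linarith
  have hmvt := (convex_Iic X).mul_sub_le_image_sub_of_le_deriv
    (fun x hx => (hψ x hx).continuousAt.continuousWithinAt)
    (fun x hx => (hψ x (interior_subset (s := Iic X) hx)).differentiableAt.differentiableWithinAt)
    hψ'
    y hyX X (mem_Iic.mpr le_rfl) hyX
  have hηy : η * (X - y) = (θ X)⁻¹ + η := by
    simp only [y]
    field_simp
    ring
  have : 0 < (θ y)⁻¹ := inv_pos.mpr (hpos y hyX)
  linarith

theorem exists_le_inv_of_hasDerivAt_riccati {θ v : ℝ → ℝ} {c η : ℝ} (hc : 0 < c) (hη : 0 < η)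
    (hv : ∀ᶠ x in atBot, v x ≤ -η)
    (hθ : ∀ x, HasDerivAt θ (v x * θ x ^ 2 - c * θ x + 1) x) (x₀ : ℝ) :
    ∃ x ≤ x₀, θ x ≤ c⁻¹ := by
  by_contra! hgt
  obtain ⟨M, hM⟩ := eventually_atBot.mp hv
  have hθ' : ∀ x ≤ min M x₀, v x * θ x ^ 2 - c * θ x + 1 ≤ -η * θ x ^ 2 := by
    intro x hx
    have hcθ : 1 < c * θ x := by
      simpa [hc.ne'] using mul_lt_mul_of_pos_left (hgt x (hx.trans (min_le_right _ _))) hc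
    nlinarith [hM x (hx.trans (min_le_left _ _)), sq_nonneg (θ x)]
  obtain ⟨x, hx, hθx⟩ := exists_nonpos_of_hasDerivAt_le_neg_mul_sq hη (fun x _ => hθ x) hθ'
  linarith [hgt x (hx.trans (min_le_right _ _)), inv_pos.mpr hc]

/-- The paper's `r_α`. -/
noncomputable def barrier (α v : ℝ) : ℝ :=
  if 0 ≤ v then α / (1 + α ^ 2 * (1 - v)) else α / (1 + α ^ 2)

lemma barrier_eq (α v : ℝ) : barrier α v = α / (1 + α ^ 2 * (1 - max v 0)) := by
  unfold barrier
  split_ifs with hv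
  · rw [max_eq_left hv]
  · rw [max_eq_right (not_le.mp hv).le, sub_zero, mul_one]

lemma barrier_denom_pos (α : ℝ) {v : ℝ} (hv : v ≤ 1) : 0 < 1 + α ^ 2 * (1 - max v 0) := by
  have : 0 ≤ 1 - max v 0 := sub_nonneg.mpr (max_le hv zero_le_one)
  positivity

lemma monotoneOn_barrier {α : ℝ} (hα : 0 ≤ α) : MonotoneOn (barrier α) (Iic 1) := by
  intro v _ w hw hvw
  simp only [barrier_eq]
  gcongr
  exact barrier_denom_pos α hw

lemma inv_add_inv_le_barrier {α v : ℝ} (hα : 0 < α) (hv : v ≤ 1) :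
    (α + α⁻¹)⁻¹ ≤ barrier α v := by
  have hd := barrier_denom_pos α hv
  rw [barrier_eq, show (α + α⁻¹)⁻¹ = α / (1 + α ^ 2) by field_simp; ring]
  gcongr
  nlinarith [le_max_right v 0, sq_nonneg α]

lemma barrier_le_self {α v : ℝ} (hα : 0 ≤ α) (hv : v ≤ 1) : barrier α v ≤ α := by
  rw [barrier_eq]
  refine div_le_self hα ?_
  have : 0 ≤ 1 - max v 0 := sub_nonneg.mpr (max_le hv zero_le_one)
  nlinarith [sq_nonneg α]

lemma riccati_neg_of_nonneg {α v t : ℝ} (hα : 0 < α) (hv0 : 0 ≤ v) (hv1 : v ≤ 1)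
    (hlt : α / (1 + α ^ 2 * (1 - v)) < t) (ht : t < α⁻¹) :
    v * t ^ 2 - (α + α⁻¹) * t + 1 < 0 := by
  have hD : 0 < 1 + α ^ 2 * (1 - v) := by nlinarith [sq_nonneg α]
  have hαt : α * t < 1 := by
    simpa [hα.ne'] using mul_lt_mul_of_pos_left ht hα
  have h1 : α < t * (1 + α ^ 2 * (1 - v)) := (div_lt_iff₀ hD).mp hlt
  have h2 : α ≤ (1 + α ^ 2) * t := by nlinarith [mul_nonneg (sq_nonneg α) hv0]
  have e1 : 0 < (t * (1 + α ^ 2 * (1 - v)) - α) * (1 - α * t) := by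
    apply mul_pos <;> linarith
  have e2 : 0 ≤ α * (1 - v) * t * ((1 + α ^ 2) * t - α) := by
    have : 0 ≤ t := by nlinarith
    exact mul_nonneg (mul_nonneg (mul_nonneg hα.le (by linarith)) this) (by linarith)
  have : α * (v * t ^ 2 - (α + α⁻¹) * t + 1) < 0 := by
    have e : α * (v * t ^ 2 - (α + α⁻¹) * t + 1) = -((t * (1 + α ^ 2 * (1 - v)) - α) * (1 - α * t)
        + α * (1 - v) * t * ((1 + α ^ 2) * t - α)) := by
      field_simp
      ring
    rw [e]
    linarith
  exact neg_of_mul_neg_right this hα.le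

lemma riccati_neg_of_barrier_lt {α v t : ℝ} (hα : 0 < α) (hv : v ≤ 1) (hlt : barrier α v < t)
    (ht : t < α⁻¹) : v * t ^ 2 - (α + α⁻¹) * t + 1 < 0 := by
  rcases le_or_gt 0 v with hv0 | hv0
  · rw [barrier, if_pos hv0] at hlt
    exact riccati_neg_of_nonneg hα hv0 hv hlt ht
  · rw [barrier, if_neg hv0.not_ge] at hlt
    have := riccati_neg_of_nonneg hα le_rfl zero_le_one (by simpa using hlt) ht
    nlinarith [sq_nonneg t]

theorem stmt12_general (g U : ℝ → ℝ) (α : ℝ) (hα : α ∈ Set.Ioo (0:ℝ) 1)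
    (hgC1 : ContDiff ℝ 1 g)
    (hg0 : g 0 = 0) (hg1 : g 1 = 0) (hg'0 : deriv g 0 = 1)
    (hg'anti : StrictAntiOn (deriv g) (Set.Icc 0 1))
    (hUC2 : ContDiff ℝ 2 U) (hUrange : ∀ s, U s ∈ Set.Ioo (0:ℝ) 1)
    (hUode : ∀ s, deriv (deriv U) s + (α + α⁻¹) * deriv U s + g (U s) = 0)
    (hU' : ∀ s, deriv U s < 0)
    (hUbot : Tendsto U atBot (nhds 1)) :
    ∀ x : ℝ,
      -deriv U x ≤
        (if 0 ≤ deriv g (U x) then α / (1 + α ^ 2 * (1 - deriv g (U x)))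
          else α / (1 + α ^ 2)) * g (U x) := by
  intro x₀
  obtain ⟨hα0, hα1⟩ := hα
  have hUmem : ∀ x, U x ∈ Icc (0:ℝ) 1 := fun x => Ioo_subset_Icc_self (hUrange x)
  have hgU : ∀ x, 0 < g (U x) := fun x =>
    pos_of_strictAntiOn_deriv hgC1.continuous.continuousOn hg0 hg1 hg'anti _ (hUrange x)
  set v := fun x => deriv g (U x)
  set θ := fun x => -deriv U x / g (U x)
  have hv1 : ∀ x, v x ≤ 1 := fun x =>
    hg'0 ▸ (hg'anti (left_mem_Icc.mpr zero_le_one) (hUmem x) (hUrange x).1).le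
  have hv_mono : Monotone v := fun x y hxy =>
    hg'anti.antitoneOn (hUmem y) (hUmem x) ((strictAnti_of_deriv_neg hU').antitone hxy)
  have hg'1 : deriv g 1 < 0 := deriv_right_neg_of_strictAntiOn_deriv one_pos
    hgC1.continuous.continuousOn (hg0.trans hg1.symm) hg'anti
  have hv_atBot : ∀ᶠ x in atBot, v x ≤ -(-deriv g 1 / 2) :=
    (((hgC1.continuous_deriv le_rfl).tendsto 1).comp hUbot).eventually_le_const (by linarith)
  have hθ : ∀ x, HasDerivAt θ (v x * θ x ^ 2 - (α + α⁻¹) * θ x + 1) x := fun x =>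
    hasDerivAt_neg_deriv_div_comp (hgC1.differentiable one_ne_zero _)
      (hUC2.differentiable two_ne_zero x) (hUC2.differentiable_deriv_two x) (hgU x).ne' (hUode x)
  obtain ⟨x₁, hx₁, hθx₁⟩ :=
    exists_le_inv_of_hasDerivAt_riccati (by positivity) (by linarith) hv_atBot hθ x₀
  have hθ_le : θ x₀ ≤ barrier α (v x₀) :=
    image_le_of_deriv_neg_of_mem_Ioo (M := α⁻¹)
      (fun x _ => (hθ x).continuousAt.continuousWithinAt) (fun x _ => (hθ x).hasDerivWithinAt)
      (hθx₁.trans (inv_add_inv_le_barrier hα0 (hv1 x₀)))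
      ((barrier_le_self hα0.le (hv1 x₀)).trans_lt (hα1.trans ((one_lt_inv₀ hα0).mpr hα1)))
      (fun x hx hKθ hθα => riccati_neg_of_barrier_lt hα0 (hv1 x)
        ((monotoneOn_barrier hα0.le (hv1 x) (hv1 x₀) (hv_mono hx.2.le)).trans_lt hKθ) hθα)
      ⟨hx₁, le_rfl⟩
  exact (div_le_iff₀ (hgU x₀)).mp hθ_le

/-- Lemma 5.1: `−U′ ≤ r_α(g′(U)) g(U)`, where
`r_α(v) = α/(1 + α²(1−v))` for `v ∈ [0,1]` and `r_α(v) = α/(1+α²)` for `v < 0`. -/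
theorem stmt12 (g U : ℝ → ℝ) (α : ℝ) (hα : α ∈ Set.Ioo (0:ℝ) 1)
    (hgC1 : ContDiff ℝ 1 g) (hgnonneg : ∀ u ∈ Set.Icc (0:ℝ) 1, 0 ≤ g u)
    (hg0 : g 0 = 0) (hg1 : g 1 = 0) (hg'0 : deriv g 0 = 1)
    (hg'anti : StrictAntiOn (deriv g) (Set.Icc 0 1)) (hg'1 : -1 ≤ deriv g 1)
    (hgint : MeasureTheory.IntegrableOn (fun u => (u - g u) / u ^ 2) (Set.Ioc 0 1))
    (hUC2 : ContDiff ℝ 2 U) (hUrange : ∀ s, U s ∈ Set.Ioo (0:ℝ) 1)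
    (hUode : ∀ s, deriv (deriv U) s + (α + α⁻¹) * deriv U s + g (U s) = 0)
    (hU' : ∀ s, deriv U s < 0)
    (hUbot : Tendsto U atBot (nhds 1)) (hUtop : Tendsto U atTop (nhds 0)) :
    ∀ x : ℝ,
      -deriv U x ≤
        (if 0 ≤ deriv g (U x) then α / (1 + α ^ 2 * (1 - deriv g (U x)))
          else α / (1 + α ^ 2)) * g (U x) :=
  stmt12_general g U α hα hgC1 hg0 hg1 hg'0 hg'anti hUC2 hUrange hUode hU' hUbot
end

section
/- Let g satisfy (G), let α ∈ (0,1), c_α := α + α^{−1}, and let U : ℝ → (0,1) be a C² solution of U″ + c_α U′ + g(U) = 0 with U′ < 0, lim_{s→−∞} U(s) = 1 and lim_{s→∞} U(s) = 0. Define q : (−∞,1] → ℝ by q(v) = 2/(c_α + √(c_α² − 4v)) for v ∈ [0,1] and q(v) = 1/c_α for v < 0. Then −U′(x) ≤ q(g′(U(x))) · g(U(x)) for every x ∈ ℝ; moreover q(v) ≤ r_α(v) for all v ∈ (−∞,1], where r_α(v) = α/(1 + α²(1−v)) for v ∈ [0,1] and r_α(v) = α/(1+α²) for v < 0. -/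
/-!
Put `c = α + α⁻¹`, `v = g' ∘ U` and `ζ = -U' / g(U)`. The travelling-wave equation turns into the
Riccati equation `ζ' = v ζ² - c ζ + 1`, and `v` increases along the wave, stays below
`g'(0) = 1`, and tends to `g'(1) ≤ 0` at `-∞`. For `v ≤ 1` the right-hand side is negative on
`(q(v), α⁻¹]`, so `ζ` can only cross the increasing barriers `α⁻¹` and `q ∘ v + ε` from above
to below. If `ζ` exceeded `α⁻¹` somewhere, it would do so on a whole left half-line, where
`-U'` then decreases, so `U` would be unbounded at `-∞`. If `ζ` exceeded `q ∘ v + ε` somewhere,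
it would do so on a left half-line, where eventually `ζ' ≤ -cε/2`, so `ζ` would be unbounded
at `-∞`. The bound `q ≤ r_α` is algebra.
-/

open Filter Real Set Topology

theorem image_le_of_hasDerivAt_neg_monotone_boundary {f f' b : ℝ → ℝ}
    (hf : ∀ t, HasDerivAt f (f' t) t) (hb : Continuous b) (hbm : Monotone b)
    (hcontact : ∀ t, f t = b t → f' t < 0) {y x : ℝ} (hyx : y ≤ x) (hy : f y ≤ b y) :
    f x ≤ b x := by
  have hfc : Continuous f := continuous_iff_continuousAt.2 fun t => (hf t).continuousAt
  refine IsClosed.Icc_subset_of_forall_mem_nhdsWithin (s := {t | f t ≤ b t})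
    ((isClosed_le hfc hb).inter isClosed_Icc) hy (fun t ht => ?_) ⟨hyx, le_rfl⟩
  have hbelow : ∀ᶠ z in 𝓝[>] t, f z ≤ b t := by
    rcases (show f t ≤ b t from ht.1).lt_or_eq with hlt | heq
    · exact (((hf t).continuousAt.eventually_lt continuousAt_const hlt).filter_mono
        nhdsWithin_le_nhds).mono fun z hz => hz.le
    · filter_upwards [(hf t).hasDerivWithinAt.limsup_slope_le' (lt_irrefl t) (hcontact t heq),
        self_mem_nhdsWithin] with z hslope hz
      rw [slope_def_field, div_lt_iff₀ (sub_pos.2 hz)] at hslope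
      linarith
  filter_upwards [hbelow, self_mem_nhdsWithin] with z hz hzt
  exact hz.trans (hbm (le_of_lt hzt))

theorem tendsto_atBot_atTop_of_deriv_le_neg_s13 {f : ℝ → ℝ} {κ Y : ℝ} (hf : Differentiable ℝ f)
    (hκ : 0 < κ) (hf' : ∀ t ≤ Y, deriv f t ≤ -κ) : Tendsto f atBot atTop := by
  have hlin : Tendsto (fun y => f Y + κ * (Y - y)) atBot atTop :=
    tendsto_atTop_add_const_left _ _ <|
      (tendsto_atTop_add_const_left _ _ tendsto_neg_atBot_atTop).const_mul_atTop hκ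
  refine tendsto_atTop_mono' _ ?_ hlin
  filter_upwards [eventually_le_atBot Y] with y hy
  have := (convex_Iic Y).image_sub_le_mul_sub_of_deriv_le hf.continuous.continuousOn
    hf.differentiableOn (fun t ht => hf' t (interior_subset (s := Iic Y) ht))
    y hy Y (le_refl Y) hy
  linarith

theorem pos_of_strictAntiOn_deriv_s13 {g : ℝ → ℝ} (hgc : ContinuousOn g (Icc 0 1)) (hg0 : g 0 = 0)
    (hg1 : g 1 = 0) (hanti : StrictAntiOn (deriv g) (Icc 0 1)) {u : ℝ} (hu : u ∈ Ioo 0 1) :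
    0 < g u := by
  have hconc := (hanti.mono interior_subset).strictConcaveOn_of_deriv (convex_Icc 0 1) hgc
  simpa [hg0, hg1] using hconc.lt_on_openSegment (left_mem_Icc.2 zero_le_one)
    (right_mem_Icc.2 zero_le_one) zero_ne_one (by rwa [openSegment_eq_Ioo zero_lt_one])

theorem deriv_one_neg_of_strictAntiOn_deriv {g : ℝ → ℝ} (hgc : ContinuousOn g (Icc 0 1))
    (hg0 : g 0 = 0) (hg1 : g 1 = 0) (hanti : StrictAntiOn (deriv g) (Icc 0 1)) :
    deriv g 1 < 0 := by
  obtain ⟨c, hc, hgc⟩ := exists_deriv_eq_zero zero_lt_one hgc (hg0.trans hg1.symm)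
  exact hgc ▸ hanti (Ioo_subset_Icc_self hc) (right_mem_Icc.2 zero_le_one) hc.2

noncomputable def riccati (α v z : ℝ) : ℝ := v * z ^ 2 - (α + α⁻¹) * z + 1

/-- For `0 ≤ v ≤ 1` the smaller root of `riccati α v`; for `v < 0` it keeps its value
`(α + α⁻¹)⁻¹` at `v = 0`, which is the paper's `q(v) = 1/c_α`. -/
noncomputable def riccatiRoot (α v : ℝ) : ℝ :=
  2 / ((α + α⁻¹) + √((α + α⁻¹) ^ 2 - 4 * max v 0))

section Riccati

variable {α : ℝ}

theorem riccati_inv (hα : 0 < α) (v : ℝ) : riccati α v α⁻¹ = (v - 1) * α⁻¹ ^ 2 := by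
  unfold riccati
  field_simp
  ring

theorem riccatiRoot_of_nonpos (hα : 0 < α) {v : ℝ} (hv : v ≤ 0) :
    riccatiRoot α v = (α + α⁻¹)⁻¹ := by
  have hc : 0 < α + α⁻¹ := by positivity
  rw [riccatiRoot, max_eq_right hv, mul_zero, sub_zero, sqrt_sq hc.le, ← two_mul,
    div_mul_cancel_left₀ two_ne_zero]

theorem riccati_discr_nonneg (hα : 0 < α) {v : ℝ} (hv : v ≤ 1) :
    0 ≤ (α + α⁻¹) ^ 2 - 4 * v := by
  nlinarith [sq_nonneg (α⁻¹ - α), mul_inv_cancel₀ hα.ne']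

theorem riccati_riccatiRoot (hα : 0 < α) {v : ℝ} (hv₀ : 0 ≤ v) (hv₁ : v ≤ 1) :
    riccati α v (riccatiRoot α v) = 0 := by
  have hs := sq_sqrt (riccati_discr_nonneg hα hv₁)
  have hpos : 0 < (α + α⁻¹) + √((α + α⁻¹) ^ 2 - 4 * v) := by positivity
  rw [riccati, riccatiRoot, max_eq_left hv₀]
  generalize α + α⁻¹ = c at *
  generalize √(c ^ 2 - 4 * v) = s at *
  field_simp
  linear_combination hs

theorem riccatiRoot_mono (hα : 0 < α) : Monotone (riccatiRoot α) := by
  intro a b hab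
  unfold riccatiRoot
  gcongr

theorem continuous_riccatiRoot (hα : 0 < α) : Continuous (riccatiRoot α) := by
  unfold riccatiRoot
  exact continuous_const.div (by fun_prop) fun v => by positivity

theorem inv_le_riccatiRoot (hα : 0 < α) (v : ℝ) : (α + α⁻¹)⁻¹ ≤ riccatiRoot α v :=
  riccatiRoot_of_nonpos hα (min_le_right v 0) ▸ riccatiRoot_mono hα (min_le_left v 0)

theorem riccati_neg (hα : 0 < α) {v z : ℝ} (hv : v < 1) (hqz : riccatiRoot α v < z)
    (hz : z ≤ α⁻¹) : riccati α v z < 0 := by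
  rcases le_or_gt v 0 with hvneg | hvpos
  · rw [riccatiRoot_of_nonpos hα hvneg] at hqz
    have hc : 0 < α + α⁻¹ := by positivity
    have : 1 < (α + α⁻¹) * z := by rwa [inv_lt_iff_one_lt_mul₀' hc] at hqz
    unfold riccati
    nlinarith [mul_nonpos_of_nonpos_of_nonneg hvneg (sq_nonneg z)]
  · -- `riccati α v` vanishes at `q` and is negative at `α⁻¹`; the factor `v (w + q) - c` is
    -- increasing in `w`, so it is negative on `(q, α⁻¹]`.
    set q := riccatiRoot α v
    have hq := riccati_riccatiRoot hα hvpos.le hv.le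
    have hfactor : ∀ w, riccati α v w = (w - q) * (v * (w + q) - (α + α⁻¹)) := fun w => by
      rw [← sub_zero (riccati α v w), ← hq]; unfold riccati; ring
    have hinv : (α⁻¹ - q) * (v * (α⁻¹ + q) - (α + α⁻¹)) < 0 := by
      rw [← hfactor, riccati_inv hα]; nlinarith [sq_pos_of_pos (inv_pos.2 hα)]
    have hslope : v * (α⁻¹ + q) - (α + α⁻¹) < 0 := neg_of_mul_neg_right hinv (by linarith)
    rw [hfactor]
    exact mul_neg_of_pos_of_neg (by linarith) (by nlinarith)

theorem ite_eq_riccatiRoot (hα : 0 < α) (v : ℝ) :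
    (if 0 ≤ v then 2 / ((α + α⁻¹) + √((α + α⁻¹) ^ 2 - 4 * v)) else 1 / (α + α⁻¹)) =
      riccatiRoot α v := by
  split_ifs with hv
  · rw [riccatiRoot, max_eq_left hv]
  · rw [riccatiRoot_of_nonpos hα (not_le.1 hv).le, one_div]

theorem riccatiRoot_le (hα : 0 < α) {v : ℝ} (hv : v ≤ 1) :
    riccatiRoot α v ≤ if 0 ≤ v then α / (1 + α ^ 2 * (1 - v)) else α / (1 + α ^ 2) := by
  have hαc : α * (α + α⁻¹) = 1 + α ^ 2 := by field_simp; ring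
  split_ifs with hv₀
  · have hs := sq_sqrt (riccati_discr_nonneg hα hv)
    have hs₀ := sqrt_nonneg ((α + α⁻¹) ^ 2 - 4 * v)
    rw [riccatiRoot, max_eq_left hv₀, div_le_div_iff₀ (by positivity) (by nlinarith)]
    generalize α + α⁻¹ = c at *
    generalize √(c ^ 2 - 4 * v) = s at *
    have key : 1 + α ^ 2 - 2 * α ^ 2 * v ≤ α * s := by
      nlinarith [mul_nonneg (mul_nonneg (pow_nonneg hα.le 4) hv₀) (sub_nonneg.2 hv),
        mul_nonneg hα.le hs₀]
    nlinarith
  · rw [riccatiRoot_of_nonpos hα (not_le.1 hv₀).le, ← hαc, mul_comm,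
      div_mul_cancel_right₀ hα.ne']

end Riccati

theorem hasDerivAt_neg_deriv_div {g U : ℝ → ℝ} {α : ℝ} (hα : 0 < α) (hg : Differentiable ℝ g)
    (hU : ContDiff ℝ 2 U)
    (hode : ∀ s, deriv (deriv U) s + (α + α⁻¹) * deriv U s + g (U s) = 0)
    {t : ℝ} (hgt : g (U t) ≠ 0) :
    HasDerivAt (fun y => -deriv U y / g (U y))
      (riccati α (deriv g (U t)) (-deriv U t / g (U t))) t := by
  have hU' : HasDerivAt (deriv U) (deriv (deriv U) t) t :=
    ((hU.iterate_deriv' 1 1).differentiable one_ne_zero t).hasDerivAt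
  have hgU : HasDerivAt (fun y => g (U y)) (deriv g (U t) * deriv U t) t :=
    (hg (U t)).hasDerivAt.comp t ((hU.differentiable two_ne_zero) t).hasDerivAt
  refine (hU'.neg.div hgU hgt).congr_deriv ?_
  unfold riccati
  rw [show deriv (deriv U) t = -((α + α⁻¹) * deriv U t) - g (U t) by linarith [hode t]]
  field_simp
  simp only [Pi.neg_apply]
  ring

theorem neg_deriv_div_le_inv {g U : ℝ → ℝ} {α : ℝ} (hα : 0 < α) (hU : ContDiff ℝ 2 U)
    (hUlt : ∀ s, U s < 1)
    (hode : ∀ s, deriv (deriv U) s + (α + α⁻¹) * deriv U s + g (U s) = 0)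
    (hg : ∀ s, 0 < g (U s)) (hv : ∀ s, deriv g (U s) < 1)
    (hζ : ∀ t, HasDerivAt (fun y => -deriv U y / g (U y))
      (riccati α (deriv g (U t)) (-deriv U t / g (U t))) t)
    (x : ℝ) : -deriv U x / g (U x) ≤ α⁻¹ := by
  by_contra! hx
  have hfar : ∀ y ≤ x, α⁻¹ * g (U y) ≤ -deriv U y := by
    intro y hy
    rw [← le_div_iff₀ (hg y)]
    by_contra! hlt
    refine hx.not_ge (image_le_of_hasDerivAt_neg_monotone_boundary hζ continuous_const
      monotone_const (fun t ht => ?_) hy hlt.le)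
    rw [ht, riccati_inv hα]
    exact mul_neg_of_neg_of_pos (by linarith [hv t]) (by positivity)
  have hUd : Differentiable ℝ U := hU.differentiable two_ne_zero
  have hU'd : Differentiable ℝ (deriv U) := (hU.iterate_deriv' 1 1).differentiable one_ne_zero
  have hU'mono : MonotoneOn (deriv U) (Iic x) := by
    refine monotoneOn_of_deriv_nonneg (convex_Iic x) hU'd.continuous.continuousOn
      hU'd.differentiableOn fun t ht => ?_
    have hfar_t := hfar t (interior_subset (s := Iic x) ht)
    have hgα : g (U t) ≤ α * -deriv U t := by
      rwa [inv_mul_le_iff₀ hα] at hfar_t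
    have : 0 < α⁻¹ * -deriv U t :=
      mul_pos (inv_pos.2 hα) (lt_of_lt_of_le (mul_pos (inv_pos.2 hα) (hg t)) hfar_t)
    linarith [hode t]
  have hslope : 0 < -deriv U x := lt_of_lt_of_le (mul_pos (inv_pos.2 hα) (hg x)) (hfar x le_rfl)
  obtain ⟨y, hy⟩ := ((tendsto_atBot_atTop_of_deriv_le_neg_s13 hUd hslope
    (fun t ht => by simpa using hU'mono ht (mem_Iic.2 le_rfl) ht)).eventually_gt_atTop 1).exists
  exact (hUlt y).not_gt hy

theorem le_riccatiRoot_of_tendsto {α L : ℝ} {ζ v : ℝ → ℝ} (hα : 0 < α)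
    (hζ : ∀ t, HasDerivAt ζ (riccati α (v t) (ζ t)) t) (hv : Monotone v) (hvc : Continuous v)
    (hv₁ : ∀ t, v t < 1) (hvL : Tendsto v atBot (𝓝 L)) (hL : L ≤ 0) (hζα : ∀ t, ζ t ≤ α⁻¹)
    (x : ℝ) : ζ x ≤ riccatiRoot α (v x) := by
  by_contra! hx
  set ε := (ζ x - riccatiRoot α (v x)) / 2 with hε
  have hε₀ : 0 < ε := by linarith
  have hfar : ∀ y ≤ x, riccatiRoot α (v y) + ε ≤ ζ y := by
    intro y hy
    by_contra! hlt
    have := image_le_of_hasDerivAt_neg_monotone_boundary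
      (b := fun t => riccatiRoot α (v t) + ε) hζ
      (((continuous_riccatiRoot hα).comp hvc).add continuous_const)
      (fun a b hab => add_le_add_left (riccatiRoot_mono hα (hv hab)) ε)
      (fun t ht => riccati_neg hα (hv₁ t) (by rw [ht]; linarith) (hζα t)) hy hlt.le
    linarith
  set κ := (α + α⁻¹) * ε / 2 with hκ
  have hκ₀ : 0 < κ := by positivity
  have hvsmall := hvL.eventually_lt_const (hL.trans_lt (by positivity : 0 < κ * α ^ 2))
  obtain ⟨Y, hY⟩ := (hvsmall.and (eventually_le_atBot x)).exists_forall_of_atBot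
  have hderiv : ∀ t ≤ Y, deriv ζ t ≤ -κ := by
    intro t ht
    obtain ⟨hvt, htx⟩ := hY t ht
    have hζ₀ : (α + α⁻¹)⁻¹ + ε ≤ ζ t := by linarith [hfar t htx, inv_le_riccatiRoot hα (v t)]
    have hquad : v t * ζ t ^ 2 ≤ κ := calc
      v t * ζ t ^ 2 ≤ κ * α ^ 2 * ζ t ^ 2 := by gcongr
      _ ≤ κ * α ^ 2 * α⁻¹ ^ 2 := by gcongr; exacts [le_trans (by positivity) hζ₀, hζα t]
      _ = κ := by field_simp
    have hlin : 1 + 2 * κ ≤ (α + α⁻¹) * ζ t := calc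
      1 + 2 * κ = (α + α⁻¹) * ((α + α⁻¹)⁻¹ + ε) := by
        rw [mul_add, mul_inv_cancel₀ (by positivity)]; ring
      _ ≤ (α + α⁻¹) * ζ t := by gcongr
    rw [(hζ t).deriv, riccati]
    linarith
  obtain ⟨y, hy⟩ := ((tendsto_atBot_atTop_of_deriv_le_neg_s13 (fun t => (hζ t).differentiableAt)
    hκ₀ hderiv).eventually_gt_atTop α⁻¹).exists
  exact (hζα y).not_gt hy

theorem stmt13_general (g U : ℝ → ℝ) (α : ℝ) (hα : α ∈ Set.Ioo (0:ℝ) 1)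
    (hgC1 : ContDiff ℝ 1 g)
    (hg0 : g 0 = 0) (hg1 : g 1 = 0) (hg'0 : deriv g 0 = 1)
    (hg'anti : StrictAntiOn (deriv g) (Set.Icc 0 1))
    (hUC2 : ContDiff ℝ 2 U) (hUrange : ∀ s, U s ∈ Set.Ioo (0:ℝ) 1)
    (hUode : ∀ s, deriv (deriv U) s + (α + α⁻¹) * deriv U s + g (U s) = 0)
    (hU' : ∀ s, deriv U s < 0)
    (hUbot : Tendsto U atBot (nhds 1)) :
    (∀ x : ℝ,
      -deriv U x ≤
        (if 0 ≤ deriv g (U x)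
          then 2 / ((α + α⁻¹) + Real.sqrt ((α + α⁻¹) ^ 2 - 4 * deriv g (U x)))
          else 1 / (α + α⁻¹)) * g (U x)) ∧
    (∀ v : ℝ, v ≤ 1 →
      (if 0 ≤ v then 2 / ((α + α⁻¹) + Real.sqrt ((α + α⁻¹) ^ 2 - 4 * v))
        else 1 / (α + α⁻¹)) ≤
      (if 0 ≤ v then α / (1 + α ^ 2 * (1 - v)) else α / (1 + α ^ 2))) := by
  have hα₀ := hα.1
  have hgc : Continuous g := hgC1.continuous
  have hg'c : Continuous (deriv g) := hgC1.continuous_deriv le_rfl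
  have hUIcc : ∀ s, U s ∈ Icc (0:ℝ) 1 := fun s => Ioo_subset_Icc_self (hUrange s)
  have hgU : ∀ s, 0 < g (U s) := fun s =>
    pos_of_strictAntiOn_deriv_s13 hgc.continuousOn hg0 hg1 hg'anti (hUrange s)
  have hv₁ : ∀ s, deriv g (U s) < 1 :=
    fun s => hg'0 ▸ hg'anti (left_mem_Icc.2 zero_le_one) (hUIcc s) (hUrange s).1
  have hvmono : Monotone fun s => deriv g (U s) := fun a b hab =>
    hg'anti.antitoneOn (hUIcc b) (hUIcc a) ((strictAnti_of_deriv_neg hU').antitone hab)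
  have hζ := fun t =>
    hasDerivAt_neg_deriv_div hα₀ (hgC1.differentiable one_ne_zero) hUC2 hUode (hgU t).ne'
  have hζα := neg_deriv_div_le_inv hα₀ hUC2 (fun s => (hUrange s).2) hUode hgU hv₁ hζ
  have hζq := le_riccatiRoot_of_tendsto hα₀ hζ hvmono (hg'c.comp hUC2.continuous) hv₁
    ((hg'c.tendsto 1).comp hUbot)
    (deriv_one_neg_of_strictAntiOn_deriv hgc.continuousOn hg0 hg1 hg'anti).le hζα
  refine ⟨fun x => ?_, fun v hv => ?_⟩
  · rw [ite_eq_riccatiRoot hα₀]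
    exact (div_le_iff₀ (hgU x)).1 (hζq x)
  · rw [ite_eq_riccatiRoot hα₀]
    exact riccatiRoot_le hα₀ hv

/-- `−U′ ≤ q(g′(U)) g(U)` where `q(v) = 2/(c_α + √(c_α² − 4v))` for
`v ∈ [0,1]` and `q(v) = 1/c_α` for `v < 0`; moreover `q ≤ r_α` on `(−∞,1]`. -/
theorem stmt13 (g U : ℝ → ℝ) (α : ℝ) (hα : α ∈ Set.Ioo (0:ℝ) 1)
    (hgC1 : ContDiff ℝ 1 g) (hgnonneg : ∀ u ∈ Set.Icc (0:ℝ) 1, 0 ≤ g u)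
    (hg0 : g 0 = 0) (hg1 : g 1 = 0) (hg'0 : deriv g 0 = 1)
    (hg'anti : StrictAntiOn (deriv g) (Set.Icc 0 1)) (hg'1 : -1 ≤ deriv g 1)
    (hgint : MeasureTheory.IntegrableOn (fun u => (u - g u) / u ^ 2) (Set.Ioc 0 1))
    (hUC2 : ContDiff ℝ 2 U) (hUrange : ∀ s, U s ∈ Set.Ioo (0:ℝ) 1)
    (hUode : ∀ s, deriv (deriv U) s + (α + α⁻¹) * deriv U s + g (U s) = 0)
    (hU' : ∀ s, deriv U s < 0)
    (hUbot : Tendsto U atBot (nhds 1)) (hUtop : Tendsto U atTop (nhds 0)) :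
    (∀ x : ℝ,
      -deriv U x ≤
        (if 0 ≤ deriv g (U x)
          then 2 / ((α + α⁻¹) + Real.sqrt ((α + α⁻¹) ^ 2 - 4 * deriv g (U x)))
          else 1 / (α + α⁻¹)) * g (U x)) ∧
    (∀ v : ℝ, v ≤ 1 →
      (if 0 ≤ v then 2 / ((α + α⁻¹) + Real.sqrt ((α + α⁻¹) ^ 2 - 4 * v))
        else 1 / (α + α⁻¹)) ≤
      (if 0 ≤ v then α / (1 + α ^ 2 * (1 - v)) else α / (1 + α ^ 2))) :=
  stmt13_general g U α hα hgC1 hg0 hg1 hg'0 hg'anti hUC2 hUrange hUode hU' hUbot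
end

section
/- Let g satisfy (G), let α ∈ (0,1), c_α := α + α^{−1}, and let U : ℝ → (0,1) be a C² solution of U″ + c_α U′ + g(U) = 0 with U′ < 0, lim_{s→−∞} U(s) = 1 and lim_{s→∞} U(s) = 0. Then the function η := U′ + α g(U) satisfies η > 0 on ℝ and |η′(x)| ≤ α^{−1} η(x) for every x ∈ ℝ. -/
/-!
With `p := α (-U') (1 - g'(U)) > 0` the equation reads `η' = p - η / α`, so
`(exp (s / α) η)' = exp (s / α) p > 0`. If `η` vanished somewhere, `η` and hence `U' ≤ η`
would tend to `-∞` at `-∞`, impossible for the bounded `U`. So `η > 0` and `η' ≥ -η / α`.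

The bound `η' ≤ η / α` amounts to `α p ≤ 2 η`. Now `exp (-s / α) p` is nonincreasing: it is
`α` times `exp (-s / α) (-U')`, whose derivative is `-exp (-s / α) ζ` with
`ζ := (α + 2 / α) (-U') - g(U)`, times `1 - g'(U)`, nonincreasing as `g'` and `U` decrease.
Here `ζ ≥ 0` since `exp ((α + 2 / α) s) ζ` is nondecreasing (by `g' > -1`) and `ζ` is bounded
below. Integrating `(exp (s / α) η)' ≥ exp (2 s / α) exp (-x / α) p(x)` over `(-∞, x]` gives
`α p(x) ≤ 2 η(x)`.
-/

open Filter Real Set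

theorem hasDerivAt_exp_mul_mul {f : ℝ → ℝ} {f' c x : ℝ} (hf : HasDerivAt f f' x) :
    HasDerivAt (fun s => exp (c * s) * f s) (exp (c * x) * (f' + c * f x)) x := by
  have hexp : HasDerivAt (fun s => exp (c * s)) (exp (c * x) * c) x := by
    simpa using ((hasDerivAt_id x).const_mul c).exp
  exact (hexp.fun_mul hf).congr_deriv (by ring)

theorem monotone_exp_mul_mul {f f' : ℝ → ℝ} {c : ℝ} (hf : ∀ x, HasDerivAt f (f' x) x)
    (h : ∀ x, 0 ≤ f' x + c * f x) : Monotone fun s => exp (c * s) * f s :=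
  monotone_of_hasDerivAt_nonneg (fun x => hasDerivAt_exp_mul_mul (hf x))
    fun x => mul_nonneg (exp_pos _).le (h x)

theorem strictMono_exp_mul_mul {f f' : ℝ → ℝ} {c : ℝ} (hf : ∀ x, HasDerivAt f (f' x) x)
    (h : ∀ x, 0 < f' x + c * f x) : StrictMono fun s => exp (c * s) * f s :=
  strictMono_of_hasDerivAt_pos (fun x => hasDerivAt_exp_mul_mul (hf x))
    fun x => mul_pos (exp_pos _) (h x)

theorem tendsto_atBot_of_monotone_exp_mul_mul {f : ℝ → ℝ} {c x₀ : ℝ} (hc : 0 < c)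
    (hf : Monotone fun s => exp (c * s) * f s) (hx₀ : f x₀ < 0) : Tendsto f atBot atBot := by
  have hA : exp (c * x₀) * f x₀ < 0 := mul_neg_of_pos_of_neg (exp_pos _) hx₀
  have hbound : ∀ y ≤ x₀, f y ≤ exp (c * x₀) * f x₀ * exp (-(c * y)) := by
    intro y hy
    rw [exp_neg, ← div_eq_mul_inv, le_div_iff₀ (exp_pos _), mul_comm]
    exact hf hy
  have hexp : Tendsto (fun y => exp (-(c * y))) atBot atTop :=
    tendsto_exp_atTop.comp (tendsto_neg_atBot_atTop.comp (tendsto_id.const_mul_atBot hc))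
  exact tendsto_atBot_mono' _ (eventually_atBot.2 ⟨x₀, hbound⟩) (hexp.const_mul_atTop_of_neg hA)

theorem nonneg_of_monotone_exp_mul_mul {f : ℝ → ℝ} {c : ℝ} (hc : 0 < c)
    (hf : Monotone fun s => exp (c * s) * f s) (hbdd : BddBelow (range f)) (x : ℝ) :
    0 ≤ f x := by
  by_contra! hx
  exact not_bddBelow_of_tendsto_atBot (tendsto_atBot_of_monotone_exp_mul_mul hc hf hx) hbdd

theorem tendsto_atTop_of_tendsto_deriv_atBot {f : ℝ → ℝ} (hf : Differentiable ℝ f)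
    (h : Tendsto (deriv f) atBot atBot) : Tendsto f atBot atTop := by
  obtain ⟨a, ha⟩ := eventually_atBot.1 (h.eventually_le_atBot (-1))
  have hanti : AntitoneOn (fun s => f s + s) (Iic a) :=
    antitoneOn_of_hasDerivWithinAt_nonpos (convex_Iic a)
      (hf.continuous.add continuous_id).continuousOn
      (fun s _ => ((hf s).hasDerivAt.add (hasDerivAt_id s)).hasDerivWithinAt)
      fun s hs => by
        rw [interior_Iic] at hs
        linarith [ha s hs.le]
  have hbound : ∀ y ≤ a, f a + a + -y ≤ f y := fun y hy => by
    linarith [hanti (mem_Iic.2 hy) (mem_Iic.2 le_rfl) hy]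
  exact tendsto_atTop_mono' _ (eventually_atBot.2 ⟨a, hbound⟩)
    (tendsto_atTop_add_const_left _ _ tendsto_neg_atBot_atTop)

theorem div_mul_exp_le_of_le_deriv {F F' : ℝ → ℝ} {K μ x : ℝ} (hμ : 0 < μ)
    (hF : ∀ t ≤ x, HasDerivAt F (F' t) t) (hF₀ : ∀ t ≤ x, 0 ≤ F t)
    (hF' : ∀ t ≤ x, K * exp (μ * t) ≤ F' t) : K / μ * exp (μ * x) ≤ F x := by
  set D := fun t => F t - K / μ * exp (μ * t)
  have hD : ∀ t ≤ x, HasDerivAt D (F' t - K * exp (μ * t)) t := by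
    intro t ht
    have hexp : HasDerivAt (fun s => exp (μ * s)) (exp (μ * t) * μ) t := by
      simpa using ((hasDerivAt_id t).const_mul μ).exp
    exact ((hF t ht).fun_sub (hexp.const_mul (K / μ))).congr_deriv (by field_simp)
  have hmono : MonotoneOn D (Iic x) := by
    refine monotoneOn_of_hasDerivWithinAt_nonneg (convex_Iic x)
      (fun t ht => (hD t ht).continuousAt.continuousWithinAt)
      (fun t ht => (hD t (interior_subset ht : t ∈ Iic x)).hasDerivWithinAt)
      fun t ht => sub_nonneg.2 (hF' t (interior_subset ht : t ∈ Iic x))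
  have hlower : ∀ y ≤ x, -(K / μ) * exp (μ * y) ≤ D x := fun y hy => by
    linarith [hmono (mem_Iic.2 hy) (mem_Iic.2 le_rfl) hy, hF₀ y hy]
  have hlim : Tendsto (fun y => -(K / μ) * exp (μ * y)) atBot (nhds 0) := by
    simpa using (tendsto_exp_atBot.comp (tendsto_id.const_mul_atBot hμ)).const_mul (-(K / μ))
  linarith [le_of_tendsto hlim (eventually_atBot.2 ⟨x, hlower⟩)]

section TravelingWave

variable {g U : ℝ → ℝ} {α : ℝ}

theorem deriv_mem_Ioo_of_strictAntiOn (hg'0 : deriv g 0 = 1)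
    (hg'anti : StrictAntiOn (deriv g) (Icc 0 1)) (hg'1 : -1 ≤ deriv g 1) {u : ℝ}
    (hu : u ∈ Ioo 0 1) : deriv g u ∈ Ioo (-1) 1 := by
  have hu' : u ∈ Icc (0 : ℝ) 1 := Ioo_subset_Icc_self hu
  constructor
  · linarith [hg'anti hu' (right_mem_Icc.2 zero_le_one) hu.2]
  · simpa [hg'0] using hg'anti (left_mem_Icc.2 zero_le_one) hu' hu.1

theorem hasDerivAt_deriv_of_ode (hU : ContDiff ℝ 2 U)
    (hode : ∀ s, deriv (deriv U) s + (α + α⁻¹) * deriv U s + g (U s) = 0) (x : ℝ) :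
    HasDerivAt (deriv U) (-((α + α⁻¹) * deriv U x) - g (U x)) x :=
  (hU.differentiable_deriv_two x).hasDerivAt.congr_deriv (by linarith [hode x])

theorem hasDerivAt_eta (hα : α ≠ 0) (hg : Differentiable ℝ g) (hU : ContDiff ℝ 2 U)
    (hode : ∀ s, deriv (deriv U) s + (α + α⁻¹) * deriv U s + g (U s) = 0) (x : ℝ) :
    HasDerivAt (fun s => deriv U s + α * g (U s))
      (α * -deriv U x * (1 - deriv g (U x)) - α⁻¹ * (deriv U x + α * g (U x))) x := by
  have hgU := (hg (U x)).hasDerivAt.comp x (hU.differentiable (by norm_num) x).hasDerivAt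
  refine ((hasDerivAt_deriv_of_ode hU hode x).add (hgU.const_mul α)).congr_deriv ?_
  field_simp
  ring

theorem zeta_nonneg (hα : 0 < α) (hg : ContDiff ℝ 1 g) (hU : ContDiff ℝ 2 U)
    (hode : ∀ s, deriv (deriv U) s + (α + α⁻¹) * deriv U s + g (U s) = 0)
    (hUmem : ∀ s, U s ∈ Icc 0 1) (hU' : ∀ s, deriv U s < 0)
    (hg'U : ∀ s, -1 < deriv g (U s)) (x : ℝ) :
    0 ≤ (α + 2 * α⁻¹) * -deriv U x - g (U x) := by
  have hζ : ∀ x, HasDerivAt (fun s => (α + 2 * α⁻¹) * -deriv U s - g (U s))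
      ((α + 2 * α⁻¹) * -(-((α + α⁻¹) * deriv U x) - g (U x)) - deriv g (U x) * deriv U x) x :=
    fun x => ((hasDerivAt_deriv_of_ode hU hode x).neg.const_mul _).sub
      ((hg.differentiable one_ne_zero (U x)).hasDerivAt.comp x
        (hU.differentiable (by norm_num) x).hasDerivAt)
  have hmono := monotone_exp_mul_mul (c := α + 2 * α⁻¹) hζ fun x => by
    have hinv : 0 < α⁻¹ ^ 2 := by positivity
    have key : (α + 2 * α⁻¹) * -(-((α + α⁻¹) * deriv U x) - g (U x))
        - deriv g (U x) * deriv U x + (α + 2 * α⁻¹) * ((α + 2 * α⁻¹) * -deriv U x - g (U x))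
        = -deriv U x * (1 + 2 * α⁻¹ ^ 2 + deriv g (U x)) := by
      field_simp
      ring
    rw [key]
    exact mul_nonneg (by linarith [hU' x]) (by linarith [hg'U x])
  obtain ⟨C, hC⟩ := isCompact_Icc.bddAbove_image (hg.continuous.continuousOn (s := Icc (0 : ℝ) 1))
  refine nonneg_of_monotone_exp_mul_mul (by positivity) hmono ⟨-C, ?_⟩ x
  rintro _ ⟨s, rfl⟩
  have hgC : g (U s) ≤ C := hC ⟨U s, hUmem s, rfl⟩
  have : 0 ≤ (α + 2 * α⁻¹) * -deriv U s := mul_nonneg (by positivity) (by linarith [hU' s])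
  linarith

theorem antitone_exp_mul_p (hα : 0 < α) (hg'anti : AntitoneOn (deriv g) (Icc 0 1))
    (hU : ContDiff ℝ 2 U) (hode : ∀ s, deriv (deriv U) s + (α + α⁻¹) * deriv U s + g (U s) = 0)
    (hUmem : ∀ s, U s ∈ Icc 0 1) (hU' : ∀ s, deriv U s < 0) (hg'U : ∀ s, deriv g (U s) < 1)
    (hζ : ∀ s, 0 ≤ (α + 2 * α⁻¹) * -deriv U s - g (U s)) :
    Antitone fun s => exp (-α⁻¹ * s) * (α * -deriv U s * (1 - deriv g (U s))) := by
  have hA : Monotone fun s => exp (-α⁻¹ * s) * deriv U s :=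
    monotone_exp_mul_mul (hasDerivAt_deriv_of_ode hU hode) fun s => by linarith [hζ s]
  have hB : Antitone fun s => 1 - deriv g (U s) := fun s t hst => by
    have hUst := (strictAnti_of_deriv_neg hU').antitone hst
    linarith [hg'anti (hUmem t) (hUmem s) hUst]
  intro s t hst
  have hA₀ : 0 ≤ -(exp (-α⁻¹ * s) * deriv U s) :=
    neg_nonneg.2 (mul_nonpos_of_nonneg_of_nonpos (exp_pos _).le (hU' s).le)
  have hB₀ : 0 ≤ 1 - deriv g (U t) := by linarith [hg'U t]
  calc exp (-α⁻¹ * t) * (α * -deriv U t * (1 - deriv g (U t)))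
      = α * (-(exp (-α⁻¹ * t) * deriv U t) * (1 - deriv g (U t))) := by ring
    _ ≤ α * (-(exp (-α⁻¹ * s) * deriv U s) * (1 - deriv g (U s))) :=
      mul_le_mul_of_nonneg_left (mul_le_mul (neg_le_neg (hA hst)) (hB hst) hB₀ hA₀) hα.le
    _ = exp (-α⁻¹ * s) * (α * -deriv U s * (1 - deriv g (U s))) := by ring

theorem eta_pos (hα : 0 < α) (hg : Differentiable ℝ g) (hU : ContDiff ℝ 2 U)
    (hode : ∀ s, deriv (deriv U) s + (α + α⁻¹) * deriv U s + g (U s) = 0)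
    (hUbdd : BddAbove (range U)) (hU' : ∀ s, deriv U s < 0) (hgU : ∀ s, 0 ≤ g (U s))
    (hg'U : ∀ s, deriv g (U s) < 1) (x : ℝ) : 0 < deriv U x + α * g (U x) := by
  have hF := strictMono_exp_mul_mul (c := α⁻¹) (hasDerivAt_eta hα.ne' hg hU hode) fun s => by
    have := mul_pos (mul_pos hα (neg_pos.2 (hU' s))) (sub_pos.2 (hg'U s))
    linarith
  by_contra! hx
  have hneg : deriv U (x - 1) + α * g (U (x - 1)) < 0 := by
    refine neg_of_mul_neg_right ((hF (sub_one_lt x)).trans_le ?_) (exp_pos _).le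
    exact mul_nonpos_of_nonneg_of_nonpos (exp_pos _).le hx
  have hη := tendsto_atBot_of_monotone_exp_mul_mul (inv_pos.2 hα) hF.monotone hneg
  have hU'η : ∀ s, deriv U s ≤ deriv U s + α * g (U s) := fun s => by
    linarith [mul_nonneg hα.le (hgU s)]
  exact not_bddAbove_of_tendsto_atTop (tendsto_atTop_of_tendsto_deriv_atBot
    (hU.differentiable (by norm_num)) (tendsto_atBot_mono hU'η hη)) hUbdd

theorem half_mul_le_eta (hα : 0 < α) (hg : Differentiable ℝ g) (hU : ContDiff ℝ 2 U)
    (hode : ∀ s, deriv (deriv U) s + (α + α⁻¹) * deriv U s + g (U s) = 0)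
    (hη : ∀ s, 0 < deriv U s + α * g (U s))
    (hp : Antitone fun s => exp (-α⁻¹ * s) * (α * -deriv U s * (1 - deriv g (U s))))
    (x : ℝ) : α / 2 * (α * -deriv U x * (1 - deriv g (U x))) ≤ deriv U x + α * g (U x) := by
  set p := fun s => α * -deriv U s * (1 - deriv g (U s))
  have hexp : ∀ t, exp (-α⁻¹ * t) * exp (2 * α⁻¹ * t) = exp (α⁻¹ * t) := fun t => by
    rw [← exp_add]; ring_nf
  have key := div_mul_exp_le_of_le_deriv (x := x) (K := exp (-α⁻¹ * x) * p x)
    (μ := 2 * α⁻¹) (F := fun s => exp (α⁻¹ * s) * (deriv U s + α * g (U s)))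
    (F' := fun t => exp (α⁻¹ * t) * p t) (by positivity)
    (fun t _ => (hasDerivAt_exp_mul_mul (hasDerivAt_eta hα.ne' hg hU hode t)).congr_deriv
      (by ring))
    (fun t _ => (mul_pos (exp_pos _) (hη t)).le) fun t ht => by
      calc exp (-α⁻¹ * x) * p x * exp (2 * α⁻¹ * t)
          ≤ exp (-α⁻¹ * t) * p t * exp (2 * α⁻¹ * t) :=
            mul_le_mul_of_nonneg_right (hp ht) (exp_pos _).le
        _ = exp (α⁻¹ * t) * p t := by rw [mul_right_comm, hexp]
  have hlhs : exp (-α⁻¹ * x) * p x / (2 * α⁻¹) * exp (2 * α⁻¹ * x)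
      = exp (α⁻¹ * x) * (α / 2 * p x) := by
    rw [← hexp]
    field_simp
  rw [hlhs] at key
  exact le_of_mul_le_mul_left key (exp_pos _)

end TravelingWave

theorem stmt14_general (g U : ℝ → ℝ) (α : ℝ) (hα : α ∈ Set.Ioo (0:ℝ) 1)
    (hgC1 : ContDiff ℝ 1 g) (hgnonneg : ∀ u ∈ Set.Icc (0:ℝ) 1, 0 ≤ g u)
    (hg'0 : deriv g 0 = 1)
    (hg'anti : StrictAntiOn (deriv g) (Set.Icc 0 1)) (hg'1 : -1 ≤ deriv g 1)
    (hUC2 : ContDiff ℝ 2 U) (hUrange : ∀ s, U s ∈ Set.Ioo (0:ℝ) 1)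
    (hUode : ∀ s, deriv (deriv U) s + (α + α⁻¹) * deriv U s + g (U s) = 0)
    (hU' : ∀ s, deriv U s < 0) :
    ∀ x : ℝ,
      0 < deriv U x + α * g (U x) ∧
      |deriv (fun s => deriv U s + α * g (U s)) x| ≤
        α⁻¹ * (deriv U x + α * g (U x)) := by
  obtain ⟨hα₀, -⟩ := hα
  have hg := hgC1.differentiable one_ne_zero
  have hUmem s : U s ∈ Icc 0 1 := Ioo_subset_Icc_self (hUrange s)
  have hg'U s := deriv_mem_Ioo_of_strictAntiOn hg'0 hg'anti hg'1 (hUrange s)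
  have hUbdd : BddAbove (range U) := ⟨1, by rintro _ ⟨s, rfl⟩; exact (hUrange s).2.le⟩
  have hη := eta_pos hα₀ hg hUC2 hUode hUbdd hU' (fun s => hgnonneg _ (hUmem s))
    fun s => (hg'U s).2
  have hζ := zeta_nonneg hα₀ hgC1 hUC2 hUode hUmem hU' fun s => (hg'U s).1
  have hp := antitone_exp_mul_p hα₀ hg'anti.antitoneOn hUC2 hUode hUmem hU'
    (fun s => (hg'U s).2) hζ
  intro x
  have hp₀ : 0 < α * -deriv U x * (1 - deriv g (U x)) :=
    mul_pos (mul_pos hα₀ (neg_pos.2 (hU' x))) (sub_pos.2 (hg'U x).2)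
  have hp_le : α * -deriv U x * (1 - deriv g (U x)) ≤ 2 * α⁻¹ * (deriv U x + α * g (U x)) := by
    have := mul_le_mul_of_nonneg_left (half_mul_le_eta hα₀ hg hUC2 hUode hη hp x)
      (by positivity : 0 ≤ 2 * α⁻¹)
    rwa [← mul_assoc, show 2 * α⁻¹ * (α / 2) = 1 by field_simp, one_mul] at this
  refine ⟨hη x, ?_⟩
  rw [(hasDerivAt_eta hα₀.ne' hg hUC2 hUode x).deriv, abs_le]
  constructor <;> linarith

/-- `η := U′ + α g(U)` satisfies `η > 0` and `|η′| ≤ α⁻¹ η` on `ℝ`. -/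
theorem stmt14 (g U : ℝ → ℝ) (α : ℝ) (hα : α ∈ Set.Ioo (0:ℝ) 1)
    (hgC1 : ContDiff ℝ 1 g) (hgnonneg : ∀ u ∈ Set.Icc (0:ℝ) 1, 0 ≤ g u)
    (hg0 : g 0 = 0) (hg1 : g 1 = 0) (hg'0 : deriv g 0 = 1)
    (hg'anti : StrictAntiOn (deriv g) (Set.Icc 0 1)) (hg'1 : -1 ≤ deriv g 1)
    (hgint : MeasureTheory.IntegrableOn (fun u => (u - g u) / u ^ 2) (Set.Ioc 0 1))
    (hUC2 : ContDiff ℝ 2 U) (hUrange : ∀ s, U s ∈ Set.Ioo (0:ℝ) 1)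
    (hUode : ∀ s, deriv (deriv U) s + (α + α⁻¹) * deriv U s + g (U s) = 0)
    (hU' : ∀ s, deriv U s < 0)
    (hUbot : Tendsto U atBot (nhds 1)) (hUtop : Tendsto U atTop (nhds 0)) :
    ∀ x : ℝ,
      0 < deriv U x + α * g (U x) ∧
      |deriv (fun s => deriv U s + α * g (U s)) x| ≤
        α⁻¹ * (deriv U x + α * g (U x)) :=
  stmt14_general g U α hα hgC1 hgnonneg hg'0 hg'anti hg'1 hUC2 hUrange hUode hU'
end

section
/- Let μ > 0 and let ψ : ℝ → ℝ be twice differentiable with ψ > 0, ψ′ < 0, and ψ″(x) ≤ μ² ψ(x) for all x ∈ ℝ. Then −ψ′(x) ≤ μ ψ(x) for all x ∈ ℝ. -/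
open MeasureTheory Filter Real Set

/-!
Put `g := ψ' + μ ψ`. The hypothesis `ψ'' ≤ μ² ψ` says exactly `g' ≤ μ g`, so by Grönwall
`g t ≤ g x₀ e^{μ (t - x₀)}` for `t ≥ x₀`. If `g x₀ < 0` this gives `ψ' ≤ g ≤ g x₀ < 0` on
`[x₀, ∞)`, so `ψ` decreases at least linearly there and cannot stay positive.
-/

theorem le_mul_exp_of_hasDerivAt_le_mul {f f' : ℝ → ℝ} {K : ℝ}
    (hf : ∀ x, HasDerivAt f (f' x) x) (hle : ∀ x, f' x ≤ K * f x) {a t : ℝ} (hat : a ≤ t) :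
    f t ≤ f a * exp (K * (t - a)) := by
  have h := le_gronwallBound_of_liminf_deriv_right_le (δ := f a) (ε := 0)
    (fun x _ => (hf x).continuousAt.continuousWithinAt)
    (fun x _ _ hr => (hf x).hasDerivWithinAt.liminf_right_slope_le hr) le_rfl
    (fun x _ => by simpa using hle x) t ⟨hat, le_rfl⟩
  rwa [gronwallBound_ε0] at h

theorem le_of_hasDerivAt_le_mul_of_nonpos {f f' : ℝ → ℝ} {K : ℝ} (hK : 0 ≤ K)
    (hf : ∀ x, HasDerivAt f (f' x) x) (hle : ∀ x, f' x ≤ K * f x) {a t : ℝ} (ha : f a ≤ 0)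
    (hat : a ≤ t) : f t ≤ f a :=
  calc f t ≤ f a * exp (K * (t - a)) := le_mul_exp_of_hasDerivAt_le_mul hf hle hat
    _ ≤ f a * 1 := mul_le_mul_of_nonpos_left (one_le_exp (by nlinarith)) ha
    _ = f a := mul_one _

theorem exists_nonpos_of_deriv_le_neg {f : ℝ → ℝ} (hf : Differentiable ℝ f) {a c : ℝ}
    (hc : c < 0) (hderiv : ∀ x ∈ Ici a, deriv f x ≤ c) : ∃ t, f t ≤ 0 := by
  set t := a + |f a| / -c
  have hat : a ≤ t := le_add_of_nonneg_right (div_nonneg (abs_nonneg _) (by linarith))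
  have hdrop : f t - f a ≤ c * (t - a) :=
    (convex_Ici a).image_sub_le_mul_sub_of_deriv_le hf.continuous.continuousOn
      hf.differentiableOn (fun x hx => hderiv x (interior_subset hx)) a self_mem_Ici t hat hat
  have hct : c * (t - a) = -|f a| := by
    simp only [t, add_sub_cancel_left]
    field_simp [hc.ne]
  exact ⟨t, by linarith [le_abs_self (f a)]⟩

theorem stmt19_general (μ : ℝ) (hμ : 0 < μ) (ψ : ℝ → ℝ)
    (hψdiff : ∀ x, DifferentiableAt ℝ ψ x)
    (hψ'diff : ∀ x, DifferentiableAt ℝ (deriv ψ) x)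
    (hpos : ∀ x, 0 < ψ x)
    (hsecond : ∀ x, deriv (deriv ψ) x ≤ μ ^ 2 * ψ x) :
    ∀ x, -deriv ψ x ≤ μ * ψ x := by
  intro x₀
  by_contra! hx₀
  set g : ℝ → ℝ := fun x => deriv ψ x + μ * ψ x
  have hg : ∀ x, HasDerivAt g (deriv (deriv ψ) x + μ * deriv ψ x) x := fun x =>
    (hψ'diff x).hasDerivAt.add ((hψdiff x).hasDerivAt.const_mul μ)
  have hg_le : ∀ x, deriv (deriv ψ) x + μ * deriv ψ x ≤ μ * g x := fun x => by
    linear_combination hsecond x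
  have hgx₀ : g x₀ < 0 := by simp only [g]; linarith
  have hψ' : ∀ t ∈ Ici x₀, deriv ψ t ≤ g x₀ := fun t ht => by
    have hgt := le_of_hasDerivAt_le_mul_of_nonpos hμ.le hg hg_le hgx₀.le ht
    simp only [g] at hgt ⊢
    nlinarith [hpos t]
  obtain ⟨t, ht⟩ := exists_nonpos_of_deriv_le_neg hψdiff hgx₀ hψ'
  exact (hpos t).not_ge ht

/-- if `ψ > 0` is twice differentiable with `ψ′ < 0` and
`ψ″ ≤ μ² ψ` on `ℝ` (`μ > 0`), then `−ψ′ ≤ μ ψ` on `ℝ`. -/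
theorem stmt19 (μ : ℝ) (hμ : 0 < μ) (ψ : ℝ → ℝ)
    (hψdiff : ∀ x, DifferentiableAt ℝ ψ x)
    (hψ'diff : ∀ x, DifferentiableAt ℝ (deriv ψ) x)
    (hpos : ∀ x, 0 < ψ x) (hdec : ∀ x, deriv ψ x < 0)
    (hsecond : ∀ x, deriv (deriv ψ) x ≤ μ ^ 2 * ψ x) :
    ∀ x, -deriv ψ x ≤ μ * ψ x :=
  stmt19_general μ hμ ψ hψdiff hψ'diff hpos hsecond
end
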